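/- arXiv:2309.05143 — 9 statements merged into one kernel-verified Lean document; each statement's English description precedes it below -/
import Mathlib

section
/- Let x : ℝ → ℝⁿ be a differentiable curve with x(t) ≠ 0 for all t ≥ 0 that solves the preconditioned gradient flow x'(t) = −B⁻¹∇f(x(t)), where ∇f(x) = (2/(xᵀMx))(Ax − f(x)Mx), and suppose x(0)ᵀB x(0) = 1. Then x(t)ᵀB x(t) = 1 for all t ≥ 0 (the flow stays on the B-sphere). -/
/-!
Along the flow, `Q(t) = x(t)ᵀ B x(t)` has derivative `2 x ⬝ B x' = -2 x ⬝ ∇f(x)`, because `B` is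
symmetric and cancels the preconditioner `B⁻¹`. The Rayleigh quotient is homogeneous of degree
zero, so Euler's identity gives `x ⬝ ∇f(x) = 0`; hence `Q` is constant.
-/

open Matrix

section Calculus

variable {𝕜 ι : Type*} [NontriviallyNormedField 𝕜] [Fintype ι]

theorem HasDerivAt.dotProduct {f g : 𝕜 → ι → 𝕜} {f' g' : ι → 𝕜} {t : 𝕜}
    (hf : HasDerivAt f f' t) (hg : HasDerivAt g g' t) :
    HasDerivAt (fun s => f s ⬝ᵥ g s) (f' ⬝ᵥ g t + f t ⬝ᵥ g') t := by
  show HasDerivAt (fun s => ∑ i, f s i * g s i) (∑ i, f' i * g t i + ∑ i, f t i * g' i) t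
  rw [← Finset.sum_add_distrib]
  exact HasDerivAt.fun_sum fun i _ => (hasDerivAt_pi.1 hf i).fun_mul (hasDerivAt_pi.1 hg i)

theorem HasDerivAt.mulVec (B : Matrix ι ι 𝕜) {f : 𝕜 → ι → 𝕜} {f' : ι → 𝕜} {t : 𝕜}
    (hf : HasDerivAt f f' t) : HasDerivAt (fun s => B *ᵥ f s) (B *ᵥ f') t :=
  hasDerivAt_pi.2 fun i => HasDerivAt.fun_sum fun j _ => (hasDerivAt_pi.1 hf j).const_mul (B i j)

theorem Matrix.IsSymm.dotProduct_mulVec_comm {α : Type*} [CommSemiring α] {B : Matrix ι ι α}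
    (hB : B.IsSymm) (v w : ι → α) : v ⬝ᵥ B *ᵥ w = w ⬝ᵥ B *ᵥ v := by
  rw [dotProduct_mulVec, ← mulVec_transpose, hB.eq, dotProduct_comm]

theorem HasDerivAt.dotProduct_mulVec_self {B : Matrix ι ι 𝕜} (hB : B.IsSymm)
    {f : 𝕜 → ι → 𝕜} {f' : ι → 𝕜} {t : 𝕜} (hf : HasDerivAt f f' t) :
    HasDerivAt (fun s => f s ⬝ᵥ B *ᵥ f s) (2 * (f t ⬝ᵥ B *ᵥ f')) t := by
  refine (hf.dotProduct (hf.mulVec B)).congr_deriv ?_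
  rw [hB.dotProduct_mulVec_comm f', two_mul]

end Calculus

theorem Matrix.mulVec_nonsing_inv_mulVec {ι α : Type*} [Fintype ι] [DecidableEq ι] [CommRing α]
    {B : Matrix ι ι α} (hB : IsUnit B.det) (v : ι → α) : B *ᵥ (B⁻¹ *ᵥ v) = v := by
  rw [mulVec_mulVec, mul_nonsing_inv B hB, one_mulVec]

theorem dotProduct_mulVec_self_eq_of_preconditioned_flow {ι : Type*} [Fintype ι] [DecidableEq ι]
    {B : Matrix ι ι ℝ} (hB : B.IsSymm) (hBdet : IsUnit B.det) {x g : ℝ → ι → ℝ}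
    (hflow : ∀ t, 0 ≤ t → HasDerivAt x (-(B⁻¹ *ᵥ g t)) t)
    (horth : ∀ t, 0 ≤ t → x t ⬝ᵥ g t = 0) {t : ℝ} (ht : 0 ≤ t) :
    x t ⬝ᵥ B *ᵥ x t = x 0 ⬝ᵥ B *ᵥ x 0 := by
  have hderiv : ∀ s ∈ Set.Icc 0 t, HasDerivAt (fun s => x s ⬝ᵥ B *ᵥ x s) 0 s := fun s hs => by
    refine ((hflow s hs.1).dotProduct_mulVec_self hB).congr_deriv ?_
    rw [mulVec_neg, mulVec_nonsing_inv_mulVec hBdet, dotProduct_neg, horth s hs.1, neg_zero,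
      mul_zero]
  exact constant_of_has_deriv_right_zero
    (fun s hs => (hderiv s hs).continuousAt.continuousWithinAt)
    (fun s hs => (hderiv s (Set.Ico_subset_Icc_self hs)).hasDerivWithinAt) t
    (Set.right_mem_Icc.2 ht)

section Rayleigh

variable {ι : Type*} [Fintype ι]

noncomputable def rayleighGradient (A M : Matrix ι ι ℝ) (x : ι → ℝ) : ι → ℝ :=
  (2 / (x ⬝ᵥ M *ᵥ x)) • (A *ᵥ x - ((x ⬝ᵥ A *ᵥ x) / (x ⬝ᵥ M *ᵥ x)) • (M *ᵥ x))

/-- Euler's identity for the degree-zero homogeneous Rayleigh quotient. Where `xᵀ M x = 0` it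
holds through the junk value `2 / 0 = 0`. -/
theorem dotProduct_rayleighGradient (A M : Matrix ι ι ℝ) (x : ι → ℝ) :
    x ⬝ᵥ rayleighGradient A M x = 0 := by
  rw [rayleighGradient, dotProduct_smul, dotProduct_sub, dotProduct_smul, smul_eq_mul,
    smul_eq_mul]
  rcases eq_or_ne (x ⬝ᵥ M *ᵥ x) 0 with h | h
  · simp [h]
  · rw [div_mul_cancel₀ _ h, sub_self, mul_zero]

end Rayleigh

theorem statement_0_general {n : ℕ}
    (A M B : Matrix (Fin n) (Fin n) ℝ)
    (hB : B.PosDef)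
    (x : ℝ → (Fin n → ℝ))
    (hflow : ∀ t : ℝ, 0 ≤ t → HasDerivAt x
      (-(B⁻¹ *ᵥ ((2 / (x t ⬝ᵥ M *ᵥ x t)) •
        (A *ᵥ x t - ((x t ⬝ᵥ A *ᵥ x t) / (x t ⬝ᵥ M *ᵥ x t)) • (M *ᵥ x t))))) t)
    (hinit : x 0 ⬝ᵥ B *ᵥ x 0 = 1) :
    ∀ t : ℝ, 0 ≤ t → x t ⬝ᵥ B *ᵥ x t = 1 := by
  intro t ht
  rw [← hinit]
  exact dotProduct_mulVec_self_eq_of_preconditioned_flow hB.isHermitian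
    ((isUnit_iff_isUnit_det B).1 hB.isUnit) hflow
    (fun s _ => dotProduct_rayleighGradient A M (x s)) ht

/-- The preconditioned gradient flow stays on the B-sphere. -/
theorem statement_0 {n : ℕ} (hn : 2 ≤ n)
    (A M B : Matrix (Fin n) (Fin n) ℝ)
    (hA : A.PosDef) (hM : M.PosDef) (hB : B.PosDef)
    (x : ℝ → (Fin n → ℝ))
    (hxne : ∀ t : ℝ, 0 ≤ t → x t ≠ 0)
    (hflow : ∀ t : ℝ, 0 ≤ t → HasDerivAt x
      (-(B⁻¹ *ᵥ ((2 / (x t ⬝ᵥ M *ᵥ x t)) •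
        (A *ᵥ x t - ((x t ⬝ᵥ A *ᵥ x t) / (x t ⬝ᵥ M *ᵥ x t)) • (M *ᵥ x t))))) t)
    (hinit : x 0 ⬝ᵥ B *ᵥ x 0 = 1) :
    ∀ t : ℝ, 0 ≤ t → x t ⬝ᵥ B *ᵥ x t = 1 :=
  statement_0_general A M B hB x hflow hinit
end

section
/- Suppose λ₁ ≤ ρ < (λ₁+λ₂)/2. Then for any nonzero vectors x₁ and x₂ with f(x₁) ≤ ρ and f(x₂) ≤ ρ, one has |x₁ᵀM x₂| ≥ (1 − 2(ρ−λ₁)/(λ₂−λ₁))·‖x₁‖_M·‖x₂‖_M, and the right-hand side is strictly positive. -/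
/-!
In the coordinates `cᵢ = uᵢᵀ M x` the pencil is diagonal: `‖x‖_M² = ∑ cᵢ²` and
`xᵀ A x = ∑ λᵢ cᵢ²`. Because of the spectral gap, `f(x) ≤ ρ` forces the part of `∑ cᵢ²` carried
by the coordinates `i ≥ 2` to be at most `ε = (ρ - λ₁)/(λ₂ - λ₁) < 1/2` of the total.
If `a₀, a₁` are the norms of the first and of the remaining coordinates of `x₁`, and `b₀, b₁`
those of `x₂`, then Cauchy–Schwarz on the remaining coordinates gives
`|x₁ᵀ M x₂| ≥ a₀ b₀ - a₁ b₁`, and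
`(a₀ b₀ - a₁ b₁)(a₀ b₀ + a₁ b₁) ≥ (1 - 2ε) ‖x₁‖_M² ‖x₂‖_M²` together with
`a₀ b₀ + a₁ b₁ ≤ ‖x₁‖_M ‖x₂‖_M` yields `a₀ b₀ - a₁ b₁ ≥ (1 - 2ε) ‖x₁‖_M ‖x₂‖_M`.
-/

open Matrix

section OrthonormalCoordinates

variable {ι : Type*} [Fintype ι] [DecidableEq ι] {M : Matrix ι ι ℝ} {u : ι → ι → ℝ}

def orthoCoords (M : Matrix ι ι ℝ) (u : ι → ι → ℝ) (x : ι → ℝ) : ι → ℝ :=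
  fun i => u i ⬝ᵥ M *ᵥ x

lemma mul_mul_transpose_eq_one_of_orthonormal
    (horth : ∀ i j, u i ⬝ᵥ M *ᵥ u j = if i = j then 1 else 0) :
    of u * M * (of u)ᵀ = 1 := by
  ext i j
  rw [Matrix.one_apply, ← horth i j]
  simp only [Matrix.mul_apply, dotProduct, mulVec, of_apply, transpose_apply, Finset.mul_sum,
    Finset.sum_mul]
  rw [Finset.sum_comm]
  exact Finset.sum_congr rfl fun _ _ => Finset.sum_congr rfl fun _ _ => by ring

lemma sum_orthoCoords_smul (horth : ∀ i j, u i ⬝ᵥ M *ᵥ u j = if i = j then 1 else 0)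
    (x : ι → ℝ) : ∑ i, orthoCoords M u x i • u i = x := by
  have h : (of u)ᵀ * (of u * M) = 1 :=
    mul_eq_one_comm.mp (mul_mul_transpose_eq_one_of_orthonormal horth)
  calc ∑ i, orthoCoords M u x i • u i = (of u)ᵀ *ᵥ (of u *ᵥ M *ᵥ x) := by
        rw [mulVec_transpose, vecMul_eq_sum]; rfl
    _ = x := by rw [mulVec_mulVec, mulVec_mulVec, Matrix.mul_assoc, h, one_mulVec]

lemma dotProduct_mulVec_eq_orthoCoords
    (horth : ∀ i j, u i ⬝ᵥ M *ᵥ u j = if i = j then 1 else 0) (x : ι → ℝ) (j : ι) :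
    x ⬝ᵥ M *ᵥ u j = orthoCoords M u x j := by
  conv_lhs => rw [← sum_orthoCoords_smul horth x]
  simp only [sum_dotProduct, smul_dotProduct, horth, smul_eq_mul, mul_ite, mul_one, mul_zero,
    Finset.sum_ite_eq', Finset.mem_univ, if_true]

lemma dotProduct_mulVec_eq_sum_orthoCoords
    (horth : ∀ i j, u i ⬝ᵥ M *ᵥ u j = if i = j then 1 else 0) {A : Matrix ι ι ℝ} {lam : ι → ℝ}
    (heig : ∀ i, A *ᵥ u i = lam i • (M *ᵥ u i)) (x y : ι → ℝ) :
    x ⬝ᵥ A *ᵥ y = ∑ i, lam i * orthoCoords M u x i * orthoCoords M u y i := by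
  calc x ⬝ᵥ A *ᵥ y = x ⬝ᵥ A *ᵥ ∑ i, orthoCoords M u y i • u i := by
        rw [sum_orthoCoords_smul horth]
    _ = _ := by
        simp only [mulVec_sum, mulVec_smul, heig, dotProduct_sum, dotProduct_smul,
          dotProduct_mulVec_eq_orthoCoords horth, smul_eq_mul]
        exact Finset.sum_congr rfl fun _ _ => by ring

lemma dotProduct_mulVec_eq_sum_orthoCoords_mul
    (horth : ∀ i j, u i ⬝ᵥ M *ᵥ u j = if i = j then 1 else 0) (x y : ι → ℝ) :
    x ⬝ᵥ M *ᵥ y = ∑ i, orthoCoords M u x i * orthoCoords M u y i := by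
  rw [dotProduct_mulVec_eq_sum_orthoCoords horth (A := M) (lam := 1) (by simp)]
  simp only [Pi.one_apply, one_mul]

lemma sum_mul_orthoCoords_sq_le_of_div_le
    (horth : ∀ i j, u i ⬝ᵥ M *ᵥ u j = if i = j then 1 else 0) (hM : M.PosDef)
    {A : Matrix ι ι ℝ} {lam : ι → ℝ} (heig : ∀ i, A *ᵥ u i = lam i • (M *ᵥ u i))
    {x : ι → ℝ} (hx : x ≠ 0) {ρ : ℝ} (hf : (x ⬝ᵥ A *ᵥ x) / (x ⬝ᵥ M *ᵥ x) ≤ ρ) :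
    ∑ i, lam i * orthoCoords M u x i ^ 2 ≤ ρ * ∑ i, orthoCoords M u x i ^ 2 := by
  rw [div_le_iff₀ (by simpa using hM.dotProduct_mulVec_pos hx)] at hf
  simpa only [dotProduct_mulVec_eq_sum_orthoCoords horth heig,
    dotProduct_mulVec_eq_sum_orthoCoords_mul horth, mul_assoc, ← sq] using hf

end OrthonormalCoordinates

lemma mul_le_sub_of_mul_sq_le_sub_mul_add {s t k R : ℝ} (hs : 0 ≤ s) (ht : 0 ≤ t) (hk : 0 ≤ k)
    (hR : 0 ≤ R) (hsum : s + t ≤ R) (hdiff : k * R ^ 2 ≤ (s - t) * (s + t)) :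
    k * R ≤ s - t := by
  rcases (add_nonneg hs ht).eq_or_lt with h | h
  · obtain ⟨rfl, rfl⟩ : s = 0 ∧ t = 0 := ⟨by linarith, by linarith⟩
    nlinarith [mul_le_mul_of_nonneg_left hdiff hk]
  · refine le_of_mul_le_mul_right ?_ h
    calc k * R * (s + t) ≤ k * R * R := by gcongr
      _ = k * R ^ 2 := by ring
      _ ≤ _ := hdiff

lemma one_sub_two_mul_mul_sqrt_le {a₀ a₁ b₀ b₁ ε : ℝ} (ha₀ : 0 ≤ a₀) (ha₁ : 0 ≤ a₁)
    (hb₀ : 0 ≤ b₀) (hb₁ : 0 ≤ b₁) (hε : ε ≤ 1 / 2)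
    (ha : a₁ ^ 2 ≤ ε * (a₀ ^ 2 + a₁ ^ 2)) (hb : b₁ ^ 2 ≤ ε * (b₀ ^ 2 + b₁ ^ 2)) :
    (1 - 2 * ε) * √(a₀ ^ 2 + a₁ ^ 2) * √(b₀ ^ 2 + b₁ ^ 2) ≤ a₀ * b₀ - a₁ * b₁ := by
  have hP : 0 ≤ a₀ ^ 2 + a₁ ^ 2 := by positivity
  have hQ : 0 ≤ b₀ ^ 2 + b₁ ^ 2 := by positivity
  have hR : (√(a₀ ^ 2 + a₁ ^ 2) * √(b₀ ^ 2 + b₁ ^ 2)) ^ 2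
      = (a₀ ^ 2 + a₁ ^ 2) * (b₀ ^ 2 + b₁ ^ 2) := by
    rw [mul_pow, Real.sq_sqrt hP, Real.sq_sqrt hQ]
  rw [mul_assoc]
  refine mul_le_sub_of_mul_sq_le_sub_mul_add (by positivity) (by positivity) (by linarith)
    (by positivity) ?_ ?_
  · -- Lagrange's identity: `PQ - (a₀b₀ + a₁b₁)² = (a₀b₁ - a₁b₀)²`
    exact abs_le_of_sq_le_sq' (by nlinarith [sq_nonneg (a₀ * b₁ - a₁ * b₀)]) (by positivity) |>.2
  · -- `(a₀b₀)² - (a₁b₁)² = PQ - a₁²Q - b₁²P ≥ (1 - 2ε)PQ`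
    nlinarith [mul_le_mul_of_nonneg_right ha hQ, mul_le_mul_of_nonneg_right hb hP]

lemma sum_succ_sq_le_of_sum_mul_sq_le {m : ℕ} {lam : Fin (m + 2) → ℝ} (hgap : lam 0 < lam 1)
    (hmono : Monotone lam) {ρ : ℝ} {c : Fin (m + 2) → ℝ}
    (hc : ∑ i, lam i * c i ^ 2 ≤ ρ * ∑ i, c i ^ 2) :
    ∑ i : Fin (m + 1), c i.succ ^ 2 ≤ (ρ - lam 0) / (lam 1 - lam 0) * ∑ i, c i ^ 2 := by
  rw [div_mul_eq_mul_div, le_div_iff₀ (sub_pos.2 hgap), mul_comm]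
  calc (lam 1 - lam 0) * ∑ i : Fin (m + 1), c i.succ ^ 2
      ≤ ∑ i : Fin (m + 1), (lam i.succ - lam 0) * c i.succ ^ 2 := by
        rw [Finset.mul_sum]
        gcongr with i
        exact hmono (Fin.succ_pos i)
    _ = ∑ i, (lam i - lam 0) * c i ^ 2 := by simp [Fin.sum_univ_succ]
    _ = ∑ i, lam i * c i ^ 2 - lam 0 * ∑ i, c i ^ 2 := by
        simp only [sub_mul, Finset.sum_sub_distrib, Finset.mul_sum]
    _ ≤ (ρ - lam 0) * ∑ i, c i ^ 2 := by linarith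

lemma one_sub_mul_sqrt_le_abs_sum_mul {m : ℕ} {lam : Fin (m + 2) → ℝ} (hgap : lam 0 < lam 1)
    (hmono : Monotone lam) {ρ : ℝ} (hρ : ρ < (lam 0 + lam 1) / 2) {c d : Fin (m + 2) → ℝ}
    (hc : ∑ i, lam i * c i ^ 2 ≤ ρ * ∑ i, c i ^ 2)
    (hd : ∑ i, lam i * d i ^ 2 ≤ ρ * ∑ i, d i ^ 2) :
    (1 - 2 * (ρ - lam 0) / (lam 1 - lam 0)) * √(∑ i, c i ^ 2) * √(∑ i, d i ^ 2)
      ≤ |∑ i, c i * d i| := by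
  set ε := (ρ - lam 0) / (lam 1 - lam 0)
  have hε : ε ≤ 1 / 2 := by rw [div_le_iff₀ (sub_pos.2 hgap)]; linarith
  set p := ∑ i : Fin (m + 1), c i.succ ^ 2
  set q := ∑ i : Fin (m + 1), d i.succ ^ 2
  have hcp : ∑ i, c i ^ 2 = |c 0| ^ 2 + √p ^ 2 := by
    rw [Fin.sum_univ_succ, sq_abs, Real.sq_sqrt (by positivity)]
  have hdq : ∑ i, d i ^ 2 = |d 0| ^ 2 + √q ^ 2 := by
    rw [Fin.sum_univ_succ, sq_abs, Real.sq_sqrt (by positivity)]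
  have hp : √p ^ 2 ≤ ε * (|c 0| ^ 2 + √p ^ 2) := by
    rw [← hcp, Real.sq_sqrt (by positivity)]; exact sum_succ_sq_le_of_sum_mul_sq_le hgap hmono hc
  have hq : √q ^ 2 ≤ ε * (|d 0| ^ 2 + √q ^ 2) := by
    rw [← hdq, Real.sq_sqrt (by positivity)]; exact sum_succ_sq_le_of_sum_mul_sq_le hgap hmono hd
  have hpq : |∑ i : Fin (m + 1), c i.succ * d i.succ| ≤ √p * √q := by
    rw [← Real.sqrt_mul (by positivity)]
    exact Real.abs_le_sqrt (Finset.sum_mul_sq_le_sq_mul_sq _ _ _)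
  calc (1 - 2 * (ρ - lam 0) / (lam 1 - lam 0)) * √(∑ i, c i ^ 2) * √(∑ i, d i ^ 2)
      = (1 - 2 * ε) * √(|c 0| ^ 2 + √p ^ 2) * √(|d 0| ^ 2 + √q ^ 2) := by
        rw [hcp, hdq, mul_div_assoc]
    _ ≤ |c 0| * |d 0| - √p * √q := one_sub_two_mul_mul_sqrt_le (abs_nonneg _)
        (Real.sqrt_nonneg _) (abs_nonneg _) (Real.sqrt_nonneg _) hε hp hq
    _ ≤ |c 0 * d 0| - |∑ i : Fin (m + 1), c i.succ * d i.succ| := by rw [abs_mul]; linarith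
    _ ≤ |∑ i, c i * d i| := by
        rw [Fin.sum_univ_succ (fun i => c i * d i)]; exact abs_sub_abs_le_abs_add _ _

theorem statement_2_general {n : ℕ}
    (A M : Matrix (Fin (n+2)) (Fin (n+2)) ℝ)
    (hM : M.PosDef)
    (lam : Fin (n+2) → ℝ) (u : Fin (n+2) → (Fin (n+2) → ℝ))
    (hgap : lam 0 < lam 1) (hmono : Monotone lam)
    (heig : ∀ i, A *ᵥ u i = lam i • (M *ᵥ u i))
    (horth : ∀ i j, u i ⬝ᵥ M *ᵥ u j = if i = j then 1 else 0)
    (ρ : ℝ) (hρ2 : ρ < (lam 0 + lam 1) / 2)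
    (x₁ x₂ : Fin (n+2) → ℝ) (hx₁ : x₁ ≠ 0) (hx₂ : x₂ ≠ 0)
    (hf₁ : (x₁ ⬝ᵥ A *ᵥ x₁) / (x₁ ⬝ᵥ M *ᵥ x₁) ≤ ρ)
    (hf₂ : (x₂ ⬝ᵥ A *ᵥ x₂) / (x₂ ⬝ᵥ M *ᵥ x₂) ≤ ρ) :
    (1 - 2 * (ρ - lam 0) / (lam 1 - lam 0)) *
        Real.sqrt (x₁ ⬝ᵥ M *ᵥ x₁) * Real.sqrt (x₂ ⬝ᵥ M *ᵥ x₂) ≤ |x₁ ⬝ᵥ M *ᵥ x₂| ∧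
      0 < (1 - 2 * (ρ - lam 0) / (lam 1 - lam 0)) *
        Real.sqrt (x₁ ⬝ᵥ M *ᵥ x₁) * Real.sqrt (x₂ ⬝ᵥ M *ᵥ x₂) := by
  have hk : 0 < 1 - 2 * (ρ - lam 0) / (lam 1 - lam 0) := by
    rw [sub_pos, div_lt_one (sub_pos.2 hgap)]; linarith
  have hnorm : ∀ x, x ≠ 0 → 0 < √(x ⬝ᵥ M *ᵥ x) := fun x hx =>
    Real.sqrt_pos.2 (by simpa using hM.dotProduct_mulVec_pos hx)
  refine ⟨?_, mul_pos (mul_pos hk (hnorm x₁ hx₁)) (hnorm x₂ hx₂)⟩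
  simpa only [dotProduct_mulVec_eq_sum_orthoCoords_mul horth, ← sq] using
    one_sub_mul_sqrt_le_abs_sum_mul hgap hmono hρ2
      (sum_mul_orthoCoords_sq_le_of_div_le horth hM heig hx₁ hf₁)
      (sum_mul_orthoCoords_sq_le_of_div_le horth hM heig hx₂ hf₂)

/-- Near-parallelism of vectors with small Rayleigh quotient. -/
theorem statement_2 {n : ℕ}
    (A M : Matrix (Fin (n+2)) (Fin (n+2)) ℝ)
    (hA : A.PosDef) (hM : M.PosDef)
    (lam : Fin (n+2) → ℝ) (u : Fin (n+2) → (Fin (n+2) → ℝ))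
    (hlam_pos : 0 < lam 0) (hgap : lam 0 < lam 1) (hmono : Monotone lam)
    (heig : ∀ i, A *ᵥ u i = lam i • (M *ᵥ u i))
    (horth : ∀ i j, u i ⬝ᵥ M *ᵥ u j = if i = j then 1 else 0)
    (ρ : ℝ) (hρ1 : lam 0 ≤ ρ) (hρ2 : ρ < (lam 0 + lam 1) / 2)
    (x₁ x₂ : Fin (n+2) → ℝ) (hx₁ : x₁ ≠ 0) (hx₂ : x₂ ≠ 0)
    (hf₁ : (x₁ ⬝ᵥ A *ᵥ x₁) / (x₁ ⬝ᵥ M *ᵥ x₁) ≤ ρ)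
    (hf₂ : (x₂ ⬝ᵥ A *ᵥ x₂) / (x₂ ⬝ᵥ M *ᵥ x₂) ≤ ρ) :
    (1 - 2 * (ρ - lam 0) / (lam 1 - lam 0)) *
        Real.sqrt (x₁ ⬝ᵥ M *ᵥ x₁) * Real.sqrt (x₂ ⬝ᵥ M *ᵥ x₂) ≤ |x₁ ⬝ᵥ M *ᵥ x₂| ∧
      0 < (1 - 2 * (ρ - lam 0) / (lam 1 - lam 0)) *
        Real.sqrt (x₁ ⬝ᵥ M *ᵥ x₁) * Real.sqrt (x₂ ⬝ᵥ M *ᵥ x₂) :=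
  statement_2_general A M hM lam u hgap hmono heig horth ρ hρ2 x₁ x₂ hx₁ hx₂ hf₁ hf₂
end

section
/- Let x be a nonzero vector with ρ := f(x) satisfying λ₁ ≤ ρ < (λ₁+λ₂)/2, and let u₁ be an eigenvector of the pencil (A,M) for λ₁. Then (xᵀM u₁)² ≥ ((λ₂−ρ)/(λ₂−λ₁))·‖x‖²_M·‖u₁‖²_M and (xᵀA u₁)² ≥ ((ρ⁻¹−λ₂⁻¹)/(λ₁⁻¹−λ₂⁻¹))·‖x‖²_A·‖u₁‖²_A. -/
/-!
Expand vectors in the `M`-orthonormal eigenbasis: with coefficients `aᵢ = uᵢᵀMx` one has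
`xᵀMx = ∑ aᵢ²` and `xᵀAx = ∑ λᵢ aᵢ²`, so `(λ₂ - ρ) ‖x‖²_M = ∑ (λ₂ - λᵢ) aᵢ² ≤ (λ₂ - λ₁) a₁²`,
since every term with `i ≥ 2` is nonpositive. As `λ₁` is simple, `u₁` is a multiple of the first
basis vector, so `(xᵀMu₁)² = a₁² ‖u₁‖²_M`, which gives the `M`-bound. The `A`-bound is the
`M`-bound multiplied by `λ₁²`, because `Au₁ = λ₁Mu₁` and `xᵀAx = ρ xᵀMx`.
-/

open Matrix Finset

variable {ι : Type*} [Fintype ι] [DecidableEq ι]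

def OrthonormalWrt (M : Matrix ι ι ℝ) (u : ι → ι → ℝ) : Prop :=
  ∀ i j, u i ⬝ᵥ M *ᵥ u j = if i = j then 1 else 0

theorem mul_sum_sq_le_sum_mul_sq_add {lam a : ι → ℝ} {μ : ℝ} {i₀ : ι}
    (h : ∀ j ≠ i₀, μ ≤ lam j) :
    μ * ∑ i, a i ^ 2 ≤ ∑ i, lam i * a i ^ 2 + (μ - lam i₀) * a i₀ ^ 2 := by
  have hterm : ∀ i, μ * a i ^ 2 ≤
      lam i * a i ^ 2 + if i = i₀ then (μ - lam i₀) * a i₀ ^ 2 else 0 := by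
    intro i
    split_ifs with hi
    · subst hi; linarith
    · nlinarith [h i hi, sq_nonneg (a i)]
  simpa [mul_sum, sum_add_distrib] using sum_le_sum (s := univ) fun i _ => hterm i

namespace OrthonormalWrt

variable {M A : Matrix ι ι ℝ} {u : ι → ι → ℝ} {lam : ι → ℝ}

theorem sum_smul_dotProduct_mulVec (hu : OrthonormalWrt M u) (g : ι → ℝ) (j : ι) :
    (∑ i, g i • u i) ⬝ᵥ M *ᵥ u j = g j := by
  simp [sum_dotProduct, hu _ j]

theorem linearIndependent (hu : OrthonormalWrt M u) : LinearIndependent ℝ u :=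
  Fintype.linearIndependent_iff.mpr fun g hg j => by
    simpa [hg] using (hu.sum_smul_dotProduct_mulVec g j).symm

theorem dotProduct_mulVec_sum_smul (hu : OrthonormalWrt M u) (g : ι → ℝ) (j : ι) :
    u j ⬝ᵥ M *ᵥ (∑ i, g i • u i) = g j := by
  simp [mulVec_sum, dotProduct_sum, mulVec_smul, hu j]

theorem sum_coeff_smul (hu : OrthonormalWrt M u) (x : ι → ℝ) :
    ∑ i, (u i ⬝ᵥ M *ᵥ x) • u i = x := by
  have hspan := hu.linearIndependent.span_eq_top_of_card_eq_finrank' (by simp)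
  obtain ⟨g, rfl⟩ :=
    (Submodule.mem_span_range_iff_exists_fun ℝ).mp (hspan ▸ Submodule.mem_top (x := x))
  simp only [hu.dotProduct_mulVec_sum_smul]

theorem dotProduct_mulVec_eq_sum (hu : OrthonormalWrt M u) (x y : ι → ℝ) :
    x ⬝ᵥ M *ᵥ y = ∑ i, (u i ⬝ᵥ M *ᵥ x) * (u i ⬝ᵥ M *ᵥ y) := by
  conv_lhs => rw [← hu.sum_coeff_smul x]
  simp [sum_dotProduct]

theorem dotProduct_mulVec_of_eigen (hu : OrthonormalWrt M u)
    (heig : ∀ i, A *ᵥ u i = lam i • (M *ᵥ u i)) (j : ι) (v : ι → ℝ) :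
    u j ⬝ᵥ A *ᵥ v = lam j * (u j ⬝ᵥ M *ᵥ v) := by
  conv_lhs => rw [← hu.sum_coeff_smul v]
  simp [mulVec_sum, dotProduct_sum, mulVec_smul, heig, hu j, mul_comm]

theorem dotProduct_mulVec_eq_sum_of_eigen (hu : OrthonormalWrt M u)
    (heig : ∀ i, A *ᵥ u i = lam i • (M *ᵥ u i)) (x y : ι → ℝ) :
    x ⬝ᵥ A *ᵥ y = ∑ i, lam i * (u i ⬝ᵥ M *ᵥ x) * (u i ⬝ᵥ M *ᵥ y) := by
  conv_lhs => rw [← hu.sum_coeff_smul x]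
  simp [sum_dotProduct, hu.dotProduct_mulVec_of_eigen heig, mul_left_comm, mul_assoc]

theorem coeff_eq_zero_of_eigen (hu : OrthonormalWrt M u)
    (heig : ∀ i, A *ᵥ u i = lam i • (M *ᵥ u i)) {v : ι → ℝ} {μ : ℝ}
    (hv : A *ᵥ v = μ • (M *ᵥ v)) {j : ι} (hj : lam j ≠ μ) :
    u j ⬝ᵥ M *ᵥ v = 0 := by
  have h := hu.dotProduct_mulVec_of_eigen heig j v
  rw [hv, dotProduct_smul, smul_eq_mul] at h
  exact (mul_eq_zero.mp (by linarith : (lam j - μ) * (u j ⬝ᵥ M *ᵥ v) = 0)).resolve_left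
    (sub_ne_zero.mpr hj)

theorem dotProduct_mulVec_eq_mul_of_coeff_eq_zero (hu : OrthonormalWrt M u) {v : ι → ℝ} {i₀ : ι}
    (hv : ∀ j ≠ i₀, u j ⬝ᵥ M *ᵥ v = 0) (x : ι → ℝ) :
    x ⬝ᵥ M *ᵥ v = (u i₀ ⬝ᵥ M *ᵥ x) * (u i₀ ⬝ᵥ M *ᵥ v) := by
  rw [hu.dotProduct_mulVec_eq_sum, sum_eq_single i₀ (fun j _ hj => by rw [hv j hj, mul_zero])
    (by simp)]

theorem sub_mul_le_sq_dotProduct_mulVec_of_eigen (hu : OrthonormalWrt M u)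
    (heig : ∀ i, A *ᵥ u i = lam i • (M *ᵥ u i)) {i₀ : ι} {μ : ℝ}
    (hμ_le : ∀ j ≠ i₀, μ ≤ lam j) (hlt : lam i₀ < μ) {v : ι → ℝ}
    (hv : A *ᵥ v = lam i₀ • (M *ᵥ v)) (x : ι → ℝ) :
    (μ * (x ⬝ᵥ M *ᵥ x) - x ⬝ᵥ A *ᵥ x) * (v ⬝ᵥ M *ᵥ v)
      ≤ (μ - lam i₀) * (x ⬝ᵥ M *ᵥ v) ^ 2 := by
  have hv_coeff : ∀ j ≠ i₀, u j ⬝ᵥ M *ᵥ v = 0 := fun j hj =>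
    hu.coeff_eq_zero_of_eigen heig hv (hlt.trans_le (hμ_le j hj)).ne'
  have hkey : μ * (x ⬝ᵥ M *ᵥ x) - x ⬝ᵥ A *ᵥ x ≤ (μ - lam i₀) * (u i₀ ⬝ᵥ M *ᵥ x) ^ 2 := by
    have h := mul_sum_sq_le_sum_mul_sq_add (a := fun i => u i ⬝ᵥ M *ᵥ x) hμ_le
    rw [hu.dotProduct_mulVec_eq_sum, hu.dotProduct_mulVec_eq_sum_of_eigen heig]
    simp only [mul_assoc, ← sq]
    linarith
  rw [hu.dotProduct_mulVec_eq_mul_of_coeff_eq_zero hv_coeff x,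
    hu.dotProduct_mulVec_eq_mul_of_coeff_eq_zero hv_coeff v]
  calc _ ≤ (μ - lam i₀) * (u i₀ ⬝ᵥ M *ᵥ x) ^ 2 * (u i₀ ⬝ᵥ M *ᵥ v * u i₀ ⬝ᵥ M *ᵥ v) :=
        mul_le_mul_of_nonneg_right hkey (mul_self_nonneg _)
    _ = _ := by ring

end OrthonormalWrt

theorem statement_3_general {n : ℕ}
    (A M : Matrix (Fin (n+2)) (Fin (n+2)) ℝ)
    (hM : M.PosDef)
    (lam : Fin (n+2) → ℝ) (u : Fin (n+2) → (Fin (n+2) → ℝ))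
    (hlam_pos : 0 < lam 0) (hgap : lam 0 < lam 1) (hmono : Monotone lam)
    (heig : ∀ i, A *ᵥ u i = lam i • (M *ᵥ u i))
    (horth : ∀ i j, u i ⬝ᵥ M *ᵥ u j = if i = j then 1 else 0)
    (x : Fin (n+2) → ℝ) (hx : x ≠ 0)
    (ρ : ℝ) (hρdef : ρ = (x ⬝ᵥ A *ᵥ x) / (x ⬝ᵥ M *ᵥ x))
    (hρ1 : lam 0 ≤ ρ)
    (u₁ : Fin (n+2) → ℝ)
    (heig₁ : A *ᵥ u₁ = lam 0 • (M *ᵥ u₁)) :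
    ((lam 1 - ρ) / (lam 1 - lam 0)) * (x ⬝ᵥ M *ᵥ x) * (u₁ ⬝ᵥ M *ᵥ u₁) ≤ (x ⬝ᵥ M *ᵥ u₁) ^ 2 ∧
      ((ρ⁻¹ - (lam 1)⁻¹) / ((lam 0)⁻¹ - (lam 1)⁻¹)) * (x ⬝ᵥ A *ᵥ x) * (u₁ ⬝ᵥ A *ᵥ u₁)
        ≤ (x ⬝ᵥ A *ᵥ u₁) ^ 2 := by
  have hu : OrthonormalWrt M u := horth
  have hlam_one_le : ∀ j ≠ 0, lam 1 ≤ lam j := fun j hj => hmono (Fin.one_le_of_ne_zero hj)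
  have hxMx : 0 < x ⬝ᵥ M *ᵥ x := by simpa using hM.dotProduct_mulVec_pos hx
  have hxAx : x ⬝ᵥ A *ᵥ x = ρ * (x ⬝ᵥ M *ᵥ x) := by rw [hρdef, div_mul_cancel₀ _ hxMx.ne']
  have hgap_M := hu.sub_mul_le_sq_dotProduct_mulVec_of_eigen heig hlam_one_le hgap heig₁ x
  rw [hxAx, ← sub_mul] at hgap_M
  have hM_part : (lam 1 - ρ) / (lam 1 - lam 0) * (x ⬝ᵥ M *ᵥ x) * (u₁ ⬝ᵥ M *ᵥ u₁)
      ≤ (x ⬝ᵥ M *ᵥ u₁) ^ 2 := by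
    rw [div_mul_eq_mul_div, div_mul_eq_mul_div, div_le_iff₀ (sub_pos.mpr hgap)]
    linarith
  have hfactor : (ρ⁻¹ - (lam 1)⁻¹) / ((lam 0)⁻¹ - (lam 1)⁻¹) * ρ * lam 0
      = lam 0 ^ 2 * ((lam 1 - ρ) / (lam 1 - lam 0)) := by
    have hρ : ρ ≠ 0 := (hlam_pos.trans_le hρ1).ne'
    have hlam1 : lam 1 ≠ 0 := (hlam_pos.trans hgap).ne'
    rw [inv_sub_inv hρ hlam1, inv_sub_inv hlam_pos.ne' hlam1]
    field_simp [sub_ne_zero.mpr hgap.ne']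
  refine ⟨hM_part, ?_⟩
  calc ((ρ⁻¹ - (lam 1)⁻¹) / ((lam 0)⁻¹ - (lam 1)⁻¹)) * (x ⬝ᵥ A *ᵥ x) * (u₁ ⬝ᵥ A *ᵥ u₁)
      = lam 0 ^ 2 * ((lam 1 - ρ) / (lam 1 - lam 0) * (x ⬝ᵥ M *ᵥ x) * (u₁ ⬝ᵥ M *ᵥ u₁)) := by
        rw [hxAx, heig₁, dotProduct_smul, smul_eq_mul]
        linear_combination (x ⬝ᵥ M *ᵥ x) * (u₁ ⬝ᵥ M *ᵥ u₁) * hfactor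
    _ ≤ lam 0 ^ 2 * (x ⬝ᵥ M *ᵥ u₁) ^ 2 := by gcongr
    _ = (x ⬝ᵥ A *ᵥ u₁) ^ 2 := by rw [heig₁, dotProduct_smul, smul_eq_mul, mul_pow]

/-- Alignment of a vector with small Rayleigh quotient with the first eigenvector. -/
theorem statement_3 {n : ℕ}
    (A M : Matrix (Fin (n+2)) (Fin (n+2)) ℝ)
    (hA : A.PosDef) (hM : M.PosDef)
    (lam : Fin (n+2) → ℝ) (u : Fin (n+2) → (Fin (n+2) → ℝ))
    (hlam_pos : 0 < lam 0) (hgap : lam 0 < lam 1) (hmono : Monotone lam)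
    (heig : ∀ i, A *ᵥ u i = lam i • (M *ᵥ u i))
    (horth : ∀ i j, u i ⬝ᵥ M *ᵥ u j = if i = j then 1 else 0)
    (x : Fin (n+2) → ℝ) (hx : x ≠ 0)
    (ρ : ℝ) (hρdef : ρ = (x ⬝ᵥ A *ᵥ x) / (x ⬝ᵥ M *ᵥ x))
    (hρ1 : lam 0 ≤ ρ) (hρ2 : ρ < (lam 0 + lam 1) / 2)
    (u₁ : Fin (n+2) → ℝ) (hu₁ : u₁ ≠ 0)
    (heig₁ : A *ᵥ u₁ = lam 0 • (M *ᵥ u₁)) :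
    ((lam 1 - ρ) / (lam 1 - lam 0)) * (x ⬝ᵥ M *ᵥ x) * (u₁ ⬝ᵥ M *ᵥ u₁) ≤ (x ⬝ᵥ M *ᵥ u₁) ^ 2 ∧
      ((ρ⁻¹ - (lam 1)⁻¹) / ((lam 0)⁻¹ - (lam 1)⁻¹)) * (x ⬝ᵥ A *ᵥ x) * (u₁ ⬝ᵥ A *ᵥ u₁)
        ≤ (x ⬝ᵥ A *ᵥ u₁) ^ 2 :=
  statement_3_general A M hM lam u hlam_pos hgap hmono heig horth x hx ρ hρdef hρ1 u₁ heig₁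
end

section
/- Let x be a nonzero vector with ρ := f(x) satisfying λ₁ ≤ ρ < (λ₁+λ₂)/2. Then every nonzero vector v with vᵀM x = 0 satisfies λ₁ + λ₂ − ρ ≤ f(v) ≤ λₙ. -/
/-!
In the coordinates `c = Uᵀ M z` of the `M`-orthonormal eigenbasis `U` the pencil `(A, M)` becomes
`(diag λ, I)`, and `M`-orthogonality becomes orthogonality. For orthogonal nonzero `a, d` the
weights `wᵢ = aᵢ² / ‖a‖² + dᵢ² / ‖d‖²` sum to `2` and satisfy `w₁ ≤ 1` (Bessel's inequality for
`e₁` against the orthonormal pair), so `f(x) + f(v) = ∑ λᵢ wᵢ ≥ λ₁ + λ₂`.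
-/

open Matrix Finset

section Coordinates

variable {ι : Type*} [Fintype ι]

lemma sum_sq_pos_of_ne_zero {a : ι → ℝ} (ha : a ≠ 0) : 0 < ∑ i, a i ^ 2 := by
  simpa [dotProduct, sq] using dotProduct_self_star_pos_iff.2 ha

-- Bessel's inequality for `e_j` and the orthogonal pair `a, d`, with denominators cleared.
lemma sq_mul_sum_sq_add_sq_mul_sum_sq_le {a d : ι → ℝ} (had : a ⬝ᵥ d = 0) (j : ι) :
    a j ^ 2 * ∑ i, d i ^ 2 + d j ^ 2 * ∑ i, a i ^ 2 ≤ (∑ i, a i ^ 2) * ∑ i, d i ^ 2 := by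
  classical
  have hCS : (a j * d j) ^ 2 ≤
      (∑ i ∈ univ.erase j, a i ^ 2) * ∑ i ∈ univ.erase j, d i ^ 2 := by
    rw [dotProduct, ← add_sum_erase _ _ (mem_univ j), add_eq_zero_iff_eq_neg] at had
    rw [had, neg_sq]
    exact sum_mul_sq_le_sq_mul_sq _ _ _
  rw [← add_sum_erase _ (fun i => a i ^ 2) (mem_univ j),
    ← add_sum_erase _ (fun i => d i ^ 2) (mem_univ j)]
  linear_combination hCS

lemma le_sum_mul_of_forall_ne_le {lam w : ι → ℝ} {i₀ : ι} {μ c : ℝ} (hw : ∀ i, 0 ≤ w i)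
    (hwc : w i₀ ≤ c) (hlow : lam i₀ ≤ μ) (hhigh : ∀ i ≠ i₀, μ ≤ lam i) :
    μ * ∑ i, w i + (lam i₀ - μ) * c ≤ ∑ i, lam i * w i := by
  classical
  have hrest : 0 ≤ ∑ i ∈ univ.erase i₀, (lam i - μ) * w i :=
    sum_nonneg fun i hi => mul_nonneg (sub_nonneg.2 (hhigh i (ne_of_mem_erase hi))) (hw i)
  calc μ * ∑ i, w i + (lam i₀ - μ) * c
      ≤ μ * ∑ i, w i + ((lam i₀ - μ) * w i₀ + ∑ i ∈ univ.erase i₀, (lam i - μ) * w i) := by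
        linarith [mul_le_mul_of_nonpos_left hwc (sub_nonpos.2 hlow)]
    _ = ∑ i, lam i * w i := by
        rw [add_sum_erase _ (fun i => (lam i - μ) * w i) (mem_univ i₀), mul_sum,
          ← sum_add_distrib]
        exact sum_congr rfl fun i _ => by ring

lemma add_sub_le_of_dotProduct_eq_zero {lam a d : ι → ℝ} {i₀ : ι} {μ : ℝ} (hlow : lam i₀ ≤ μ)
    (hhigh : ∀ i ≠ i₀, μ ≤ lam i) (had : a ⬝ᵥ d = 0) (ha : a ≠ 0) (hd : d ≠ 0) :
    lam i₀ + μ - (∑ i, lam i * a i ^ 2) / ∑ i, a i ^ 2 ≤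
      (∑ i, lam i * d i ^ 2) / ∑ i, d i ^ 2 := by
  set S := ∑ i, a i ^ 2
  set T := ∑ i, d i ^ 2
  have hS : 0 < S := sum_sq_pos_of_ne_zero ha
  have hT : 0 < T := sum_sq_pos_of_ne_zero hd
  have key := le_sum_mul_of_forall_ne_le (w := fun i => a i ^ 2 * T + d i ^ 2 * S) (c := S * T)
    (fun i => by positivity) (by linarith [sq_mul_sum_sq_add_sq_mul_sum_sq_le had i₀]) hlow hhigh
  have hw : ∑ i, (a i ^ 2 * T + d i ^ 2 * S) = 2 * (S * T) := by
    rw [sum_add_distrib, ← sum_mul, ← sum_mul]; ring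
  have hlw : ∑ i, lam i * (a i ^ 2 * T + d i ^ 2 * S) =
      (∑ i, lam i * a i ^ 2) * T + (∑ i, lam i * d i ^ 2) * S := by
    simp only [mul_add, sum_add_distrib, sum_mul, mul_assoc]
  simp only [hw, hlw] at key
  rw [sub_le_iff_le_add, div_add_div _ _ hT.ne' hS.ne', le_div_iff₀ (mul_pos hT hS)]
  linarith

lemma sum_mul_sq_div_sum_sq_le {lam a : ι → ℝ} {Λ : ℝ} (h : ∀ i, lam i ≤ Λ) (ha : a ≠ 0) :
    (∑ i, lam i * a i ^ 2) / ∑ i, a i ^ 2 ≤ Λ := by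
  rw [div_le_iff₀ (sum_sq_pos_of_ne_zero ha), mul_sum]
  exact sum_le_sum fun i _ => mul_le_mul_of_nonneg_right (h i) (sq_nonneg _)

end Coordinates

section Congruence

variable {ι : Type*} [Fintype ι] [DecidableEq ι]

lemma mulVec_transpose_mul_mulVec {B M : Matrix ι ι ℝ} (hB : B * M * Bᵀ = 1) (z : ι → ℝ) :
    Bᵀ *ᵥ ((B * M) *ᵥ z) = z := by
  rw [mulVec_mulVec, mul_eq_one_comm.1 hB, one_mulVec]

lemma dotProduct_mulVec_eq_of_mul_mul_transpose_eq_one {B M : Matrix ι ι ℝ}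
    (hB : B * M * Bᵀ = 1) (N : Matrix ι ι ℝ) (z w : ι → ℝ) :
    z ⬝ᵥ N *ᵥ w = ((B * M) *ᵥ z) ⬝ᵥ (B * N * Bᵀ) *ᵥ ((B * M) *ᵥ w) := by
  calc z ⬝ᵥ N *ᵥ w = (Bᵀ *ᵥ ((B * M) *ᵥ z)) ⬝ᵥ N *ᵥ (Bᵀ *ᵥ ((B * M) *ᵥ w)) := by
        rw [mulVec_transpose_mul_mulVec hB, mulVec_transpose_mul_mulVec hB]
    _ = _ := by
        rw [mulVec_transpose B, ← dotProduct_mulVec, mulVec_mulVec, mulVec_mulVec,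
          Matrix.mul_assoc]

lemma of_mul_mul_transpose_eq_one {M : Matrix ι ι ℝ} {u : ι → ι → ℝ}
    (horth : ∀ i j, u i ⬝ᵥ M *ᵥ u j = if i = j then 1 else 0) :
    of u * M * (of u)ᵀ = 1 := by
  ext i j
  rw [Matrix.mul_assoc, mul_apply, one_apply, ← horth]
  simp [dotProduct, mulVec, mul_apply]

lemma of_mul_mul_transpose_eq_diagonal {A M : Matrix ι ι ℝ} {lam : ι → ℝ} {u : ι → ι → ℝ}
    (heig : ∀ i, A *ᵥ u i = lam i • (M *ᵥ u i))
    (horth : ∀ i j, u i ⬝ᵥ M *ᵥ u j = if i = j then 1 else 0) :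
    of u * A * (of u)ᵀ = diagonal lam := by
  have hAM : A * (of u)ᵀ = M * (of u)ᵀ * diagonal lam := by
    ext k j
    have := congrFun (heig j) k
    simp only [mulVec, dotProduct, Pi.smul_apply, smul_eq_mul] at this
    rw [mul_diagonal]
    simpa [mul_apply, mul_comm] using this
  rw [Matrix.mul_assoc, hAM, ← Matrix.mul_assoc, ← Matrix.mul_assoc,
    of_mul_mul_transpose_eq_one horth, Matrix.one_mul]

lemma mulVec_ne_zero_of_mul_mul_transpose_eq_one {B M : Matrix ι ι ℝ} (hB : B * M * Bᵀ = 1)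
    {z : ι → ℝ} (hz : z ≠ 0) : (B * M) *ᵥ z ≠ 0 := fun h =>
  hz (by rw [← mulVec_transpose_mul_mulVec hB z, h, mulVec_zero])

lemma dotProduct_mulVec_eq_dotProduct_of_mul_mul_transpose_eq_one {B M : Matrix ι ι ℝ}
    (hB : B * M * Bᵀ = 1) (z w : ι → ℝ) :
    z ⬝ᵥ M *ᵥ w = ((B * M) *ᵥ z) ⬝ᵥ ((B * M) *ᵥ w) := by
  rw [dotProduct_mulVec_eq_of_mul_mul_transpose_eq_one hB M, hB, one_mulVec]

lemma rayleigh_eq_of_mul_mul_transpose_eq {A B M : Matrix ι ι ℝ} {lam : ι → ℝ}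
    (hB : B * M * Bᵀ = 1) (hD : B * A * Bᵀ = diagonal lam) (z : ι → ℝ) :
    (z ⬝ᵥ A *ᵥ z) / (z ⬝ᵥ M *ᵥ z) =
      (∑ i, lam i * ((B * M) *ᵥ z) i ^ 2) / ∑ i, ((B * M) *ᵥ z) i ^ 2 := by
  rw [dotProduct_mulVec_eq_of_mul_mul_transpose_eq_one hB A, hD,
    dotProduct_mulVec_eq_dotProduct_of_mul_mul_transpose_eq_one hB]
  simp only [dotProduct, mulVec_diagonal, sq]
  congr 1
  exact sum_congr rfl fun i _ => by ring

end Congruence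

theorem statement_4_general {n : ℕ}
    (A M : Matrix (Fin (n+2)) (Fin (n+2)) ℝ)
    (lam : Fin (n+2) → ℝ) (u : Fin (n+2) → (Fin (n+2) → ℝ))
    (hmono : Monotone lam)
    (heig : ∀ i, A *ᵥ u i = lam i • (M *ᵥ u i))
    (horth : ∀ i j, u i ⬝ᵥ M *ᵥ u j = if i = j then 1 else 0)
    (x : Fin (n+2) → ℝ) (hx : x ≠ 0)
    (ρ : ℝ) (hρdef : ρ = (x ⬝ᵥ A *ᵥ x) / (x ⬝ᵥ M *ᵥ x))
    (v : Fin (n+2) → ℝ) (hv : v ≠ 0) (hvx : v ⬝ᵥ M *ᵥ x = 0) :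
    lam 0 + lam 1 - ρ ≤ (v ⬝ᵥ A *ᵥ v) / (v ⬝ᵥ M *ᵥ v) ∧
      (v ⬝ᵥ A *ᵥ v) / (v ⬝ᵥ M *ᵥ v) ≤ lam (Fin.last (n+1)) := by
  have hB := of_mul_mul_transpose_eq_one horth
  have hD := of_mul_mul_transpose_eq_diagonal heig horth
  have hcoord_orth : ((of u * M) *ᵥ x) ⬝ᵥ ((of u * M) *ᵥ v) = 0 := by
    rw [dotProduct_comm, ← dotProduct_mulVec_eq_dotProduct_of_mul_mul_transpose_eq_one hB, hvx]
  have hv_coord := mulVec_ne_zero_of_mul_mul_transpose_eq_one hB hv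
  rw [hρdef, rayleigh_eq_of_mul_mul_transpose_eq hB hD x,
    rayleigh_eq_of_mul_mul_transpose_eq hB hD v]
  exact ⟨add_sub_le_of_dotProduct_eq_zero (hmono (Fin.zero_le 1))
      (fun i hi => hmono (Fin.one_le_of_ne_zero hi)) hcoord_orth
      (mulVec_ne_zero_of_mul_mul_transpose_eq_one hB hx) hv_coord,
    sum_mul_sq_div_sum_sq_le (fun i => hmono (Fin.le_last i)) hv_coord⟩

/-- Rayleigh quotient bounds on the M-orthogonal complement of a good vector. -/
theorem statement_4 {n : ℕ}
    (A M : Matrix (Fin (n+2)) (Fin (n+2)) ℝ)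
    (hA : A.PosDef) (hM : M.PosDef)
    (lam : Fin (n+2) → ℝ) (u : Fin (n+2) → (Fin (n+2) → ℝ))
    (hlam_pos : 0 < lam 0) (hgap : lam 0 < lam 1) (hmono : Monotone lam)
    (heig : ∀ i, A *ᵥ u i = lam i • (M *ᵥ u i))
    (horth : ∀ i j, u i ⬝ᵥ M *ᵥ u j = if i = j then 1 else 0)
    (x : Fin (n+2) → ℝ) (hx : x ≠ 0)
    (ρ : ℝ) (hρdef : ρ = (x ⬝ᵥ A *ᵥ x) / (x ⬝ᵥ M *ᵥ x))
    (hρ1 : lam 0 ≤ ρ) (hρ2 : ρ < (lam 0 + lam 1) / 2)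
    (v : Fin (n+2) → ℝ) (hv : v ≠ 0) (hvx : v ⬝ᵥ M *ᵥ x = 0) :
    lam 0 + lam 1 - ρ ≤ (v ⬝ᵥ A *ᵥ v) / (v ⬝ᵥ M *ᵥ v) ∧
      (v ⬝ᵥ A *ᵥ v) / (v ⬝ᵥ M *ᵥ v) ≤ lam (Fin.last (n+1)) :=
  statement_4_general A M lam u hmono heig horth x hx ρ hρdef v hv hvx
end

section
/- For every nonzero vector x ∈ ℝⁿ, one has ν_min ≤ (xᵀA B⁻¹A x)/(xᵀA x) ≤ ν_max. (The pencils (A,B) and (AB⁻¹A, A) share the same extreme Rayleigh-quotient bounds.) -/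
/-!
Put `w = B⁻¹ A x`, so that `B w = A x` and the numerator is `xᵀ A w = wᵀ B w`. Cauchy–Schwarz for
the form of `B` gives `(xᵀ A x)² = (xᵀ B w)² ≤ (xᵀ B x)(wᵀ B w)`, which together with
`ν_min xᵀ B x ≤ xᵀ A x` yields the lower bound; Cauchy–Schwarz for the form of `A` gives
`(xᵀ A w)² ≤ (wᵀ A w)(xᵀ A x)`, which together with `wᵀ A w ≤ ν_max wᵀ B w` yields the upper bound.
-/

open Matrix

namespace Matrix

variable {m 𝕜 : Type*} [Fintype m]

lemma IsSymm.dotProduct_mulVec_comm_s6 [CommSemiring 𝕜] {M : Matrix m m 𝕜} (hM : M.IsSymm)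
    (u v : m → 𝕜) : u ⬝ᵥ M *ᵥ v = v ⬝ᵥ M *ᵥ u := by
  rw [← dotProduct_transpose_mulVec, hM.eq]

section LinearOrderedField

variable [Field 𝕜] [LinearOrder 𝕜] [IsStrictOrderedRing 𝕜] [StarRing 𝕜] [TrivialStar 𝕜]
  {M : Matrix m m 𝕜}

lemma PosSemidef.dotProduct_mulVec_sq_le (hM : M.PosSemidef) (u v : m → 𝕜) :
    (u ⬝ᵥ M *ᵥ v) ^ 2 ≤ (u ⬝ᵥ M *ᵥ u) * (v ⬝ᵥ M *ᵥ v) := by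
  classical
  have hsymm : LinearMap.IsSymm (toBilin' M) := LinearMap.BilinForm.isSymm_iff.mp <|
    isSymm_toBilin'_iff_isSymm.mpr (isHermitian_iff_isSymm.mp hM.isHermitian)
  simpa only [toBilin'_apply'] using (toBilin' M).apply_sq_le_of_symm
    (fun z => by simpa [toBilin'_apply'] using hM.dotProduct_mulVec_nonneg z) hsymm u v

lemma PosSemidef.mul_dotProduct_mulVec_le {ν : 𝕜} (hM : M.PosSemidef) (hν : 0 ≤ ν)
    {x y : m → 𝕜} (h : ν * (x ⬝ᵥ M *ᵥ x) ≤ x ⬝ᵥ M *ᵥ y) :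
    ν * (x ⬝ᵥ M *ᵥ y) ≤ y ⬝ᵥ M *ᵥ y := by
  have hcs := hM.dotProduct_mulVec_sq_le x y
  have hy : 0 ≤ y ⬝ᵥ M *ᵥ y := by simpa using hM.dotProduct_mulVec_nonneg y
  rcases le_or_gt (x ⬝ᵥ M *ᵥ y) 0 with hxy | hxy
  · nlinarith
  · refine le_of_mul_le_mul_right ?_ hxy
    nlinarith [mul_le_mul_of_nonneg_right h hy]

lemma PosSemidef.dotProduct_mulVec_le_mul {ν : 𝕜} (hM : M.PosSemidef) (hν : 0 ≤ ν)
    {x y : m → 𝕜} (h : y ⬝ᵥ M *ᵥ y ≤ ν * (x ⬝ᵥ M *ᵥ y)) :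
    x ⬝ᵥ M *ᵥ y ≤ ν * (x ⬝ᵥ M *ᵥ x) := by
  have hcs := hM.dotProduct_mulVec_sq_le x y
  have hx : 0 ≤ x ⬝ᵥ M *ᵥ x := by simpa using hM.dotProduct_mulVec_nonneg x
  rcases le_or_gt (x ⬝ᵥ M *ᵥ y) 0 with hxy | hxy
  · nlinarith
  · refine le_of_mul_le_mul_right ?_ hxy
    nlinarith [mul_le_mul_of_nonneg_left h hx]

end LinearOrderedField

end Matrix

/-- The pencils (A,B) and (AB⁻¹A,A) share the same extreme Rayleigh-quotient bounds. -/
theorem statement_6 {n : ℕ}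
    (A B : Matrix (Fin n) (Fin n) ℝ)
    (hA : A.PosDef) (hB : B.PosDef)
    (νmin νmax : ℝ) (hνmin : 0 < νmin) (hνmax : 0 < νmax)
    (hν : ∀ z, νmin * (z ⬝ᵥ B *ᵥ z) ≤ z ⬝ᵥ A *ᵥ z ∧ z ⬝ᵥ A *ᵥ z ≤ νmax * (z ⬝ᵥ B *ᵥ z))
    (x : Fin n → ℝ) (hx : x ≠ 0) :
    νmin ≤ (x ⬝ᵥ (A * B⁻¹ * A) *ᵥ x) / (x ⬝ᵥ A *ᵥ x) ∧
      (x ⬝ᵥ (A * B⁻¹ * A) *ᵥ x) / (x ⬝ᵥ A *ᵥ x) ≤ νmax := by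
  set w := B⁻¹ *ᵥ A *ᵥ x
  have hBw : B *ᵥ w = A *ᵥ x := by
    simp only [w, mulVec_mulVec,
      mul_nonsing_inv_cancel_left B A ((isUnit_iff_isUnit_det B).mp hB.isUnit)]
  have hAsymm : A.IsSymm := isHermitian_iff_isSymm.mp hA.isHermitian
  have hnum : x ⬝ᵥ (A * B⁻¹ * A) *ᵥ x = x ⬝ᵥ A *ᵥ w := by
    simp only [w, mulVec_mulVec, Matrix.mul_assoc]
  have hwBw : w ⬝ᵥ B *ᵥ w = x ⬝ᵥ A *ᵥ w := by rw [hBw, hAsymm.dotProduct_mulVec_comm_s6]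
  have hpos : 0 < x ⬝ᵥ A *ᵥ x := by simpa using hA.dotProduct_mulVec_pos hx
  have hlow : νmin * (x ⬝ᵥ A *ᵥ x) ≤ x ⬝ᵥ A *ᵥ w :=
    calc νmin * (x ⬝ᵥ A *ᵥ x) = νmin * (x ⬝ᵥ B *ᵥ w) := by rw [hBw]
      _ ≤ w ⬝ᵥ B *ᵥ w :=
        hB.posSemidef.mul_dotProduct_mulVec_le hνmin.le (by rw [hBw]; exact (hν x).1)
      _ = x ⬝ᵥ A *ᵥ w := hwBw
  have hup : x ⬝ᵥ A *ᵥ w ≤ νmax * (x ⬝ᵥ A *ᵥ x) :=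
    hA.posSemidef.dotProduct_mulVec_le_mul hνmax.le (hwBw ▸ (hν w).2)
  rw [hnum, le_div_iff₀ hpos, div_le_iff₀ hpos]
  exact ⟨hlow, hup⟩
end

section
/- For every nonzero vector z ∈ ℝⁿ, one has zᵀA B⁻¹A z − (zᵀAz)²/(zᵀBz) ≤ (ν_max − ν_min)·(zᵀAz); equivalently, min over α ∈ ℝ of ‖B⁻¹(A − αB)z‖_B is at most √(ν_max − ν_min)·‖z‖_A, where the minimum over α of ‖B⁻¹Az − αz‖²_B equals zᵀAB⁻¹Az − (zᵀAz)²/(zᵀBz). -/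
/-!
Put `T = B⁻¹A`; it is self-adjoint for `⟨x, y⟩_B = xᵀBy`, with `zᵀAB⁻¹Az = ‖Tz‖²_B` and
`zᵀAz = ⟨Tz, z⟩_B`, and the hypothesis says `νmin ≤ T ≤ νmax`. Cauchy–Schwarz for the
semidefinite form of `A - νmin B ≤ (νmax - νmin) B` gives `(T - νmin)(νmax - T) ⪰ 0`, i.e.
`‖Tz‖²_B ≤ (νmin + νmax)⟨Tz, z⟩_B - νmin νmax ‖z‖²_B`, and the claimed bound follows by
completing a square. The minimum over `α` of `‖Tz - αz‖²_B` is that of an explicit quadratic,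
attained at `α = zᵀAz / zᵀBz`.
-/

open Matrix

namespace Matrix

variable {n : Type*} [Fintype n]

theorem IsHermitian.dotProduct_mulVec_comm {S : Matrix n n ℝ} (hS : S.IsHermitian)
    (x y : n → ℝ) : x ⬝ᵥ S *ᵥ y = y ⬝ᵥ S *ᵥ x := by
  rw [dotProduct_mulVec, ← mulVec_transpose, ← conjTranspose_eq_transpose_of_trivial, hS.eq,
    dotProduct_comm]

theorem IsHermitian.dotProduct_mulVec_sub_smul {S : Matrix n n ℝ} (hS : S.IsHermitian)
    (x y : n → ℝ) (α : ℝ) :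
    (x - α • y) ⬝ᵥ S *ᵥ (x - α • y)
      = x ⬝ᵥ S *ᵥ x - 2 * α * (y ⬝ᵥ S *ᵥ x) + α ^ 2 * (y ⬝ᵥ S *ᵥ y) := by
  simp only [mulVec_sub, mulVec_smul, sub_dotProduct, dotProduct_sub, smul_dotProduct,
    dotProduct_smul, smul_eq_mul, hS.dotProduct_mulVec_comm x y]
  ring

theorem PosSemidef.dotProduct_mulVec_sq_le_s7 {P : Matrix n n ℝ} (hP : P.PosSemidef)
    (x y : n → ℝ) : (x ⬝ᵥ P *ᵥ y) ^ 2 ≤ (x ⬝ᵥ P *ᵥ x) * (y ⬝ᵥ P *ᵥ y) := by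
  classical
  have := LinearMap.BilinForm.apply_mul_apply_le_of_forall_zero_le (toLinearMap₂' ℝ P)
    (fun v => by simpa [toLinearMap₂'_apply'] using hP.dotProduct_mulVec_nonneg v) x y
  simpa only [toLinearMap₂'_apply', hP.isHermitian.dotProduct_mulVec_comm y x, ← sq] using this

theorem PosSemidef.dotProduct_mulVec_le_of_mulVec_eq {B P : Matrix n n ℝ} (hB : B.PosSemidef)
    (hP : P.PosSemidef) {κ : ℝ} (hPB : ∀ x, x ⬝ᵥ P *ᵥ x ≤ κ * (x ⬝ᵥ B *ᵥ x))
    {v z : n → ℝ} (hv : B *ᵥ v = P *ᵥ z) :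
    v ⬝ᵥ B *ᵥ v ≤ κ * (z ⬝ᵥ P *ᵥ z) := by
  have hzB : 0 ≤ z ⬝ᵥ B *ᵥ z := by simpa using hB.dotProduct_mulVec_nonneg z
  have hzP : 0 ≤ z ⬝ᵥ P *ᵥ z := by simpa using hP.dotProduct_mulVec_nonneg z
  have hκzP : 0 ≤ κ * (z ⬝ᵥ P *ᵥ z) := by
    rcases le_or_gt 0 κ with hκ | hκ
    · positivity
    · nlinarith [hPB z, mul_nonpos_of_nonpos_of_nonneg hκ.le hzB]
  have hCS : (v ⬝ᵥ B *ᵥ v) ^ 2 ≤ (v ⬝ᵥ P *ᵥ v) * (z ⬝ᵥ P *ᵥ z) := by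
    simpa only [hv] using hP.dotProduct_mulVec_sq_le_s7 v z
  -- Cauchy–Schwarz for P: (vᵀBv)² = (vᵀPz)² ≤ vᵀPv · zᵀPz ≤ κ · vᵀBv · zᵀPz.
  nlinarith [hPB v]

/-- For `T = B⁻¹A`, self-adjoint for `⟨x, y⟩_B = xᵀBy`, this is `(T - νmin)(νmax - T) ⪰ 0`. -/
theorem PosSemidef.dotProduct_mulVec_le_of_bounds {A B : Matrix n n ℝ}
    (hA : A.IsHermitian) (hB : B.PosSemidef) {νmin νmax : ℝ}
    (hν : ∀ z, νmin * (z ⬝ᵥ B *ᵥ z) ≤ z ⬝ᵥ A *ᵥ z ∧ z ⬝ᵥ A *ᵥ z ≤ νmax * (z ⬝ᵥ B *ᵥ z))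
    {w z : n → ℝ} (hw : B *ᵥ w = A *ᵥ z) :
    w ⬝ᵥ B *ᵥ w ≤ (νmin + νmax) * (z ⬝ᵥ A *ᵥ z) - νmin * νmax * (z ⬝ᵥ B *ᵥ z) := by
  have hP : (A - νmin • B).PosSemidef :=
    .of_dotProduct_mulVec_nonneg (hA.sub (hB.isHermitian.smul (.all νmin))) fun x => by
      simpa [sub_mulVec, smul_mulVec] using sub_nonneg.mpr (hν x).1
  have hPB : ∀ x, x ⬝ᵥ (A - νmin • B) *ᵥ x ≤ (νmax - νmin) * (x ⬝ᵥ B *ᵥ x) := fun x => by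
    simp only [sub_mulVec, smul_mulVec, dotProduct_sub, dotProduct_smul, smul_eq_mul]
    linarith [(hν x).2]
  have hv : B *ᵥ (w - νmin • z) = (A - νmin • B) *ᵥ z := by
    rw [mulVec_sub, mulVec_smul, hw, sub_mulVec, smul_mulVec]
  have := hB.dotProduct_mulVec_le_of_mulVec_eq hP hPB hv
  have hzBw : z ⬝ᵥ B *ᵥ w = z ⬝ᵥ A *ᵥ z := by rw [hw]
  rw [hB.isHermitian.dotProduct_mulVec_sub_smul, hzBw] at this
  simp only [sub_mulVec, smul_mulVec, dotProduct_sub, dotProduct_smul, smul_eq_mul] at this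
  linarith

variable [DecidableEq n]

theorem PosDef.isUnit_det {B : Matrix n n ℝ} (hB : B.PosDef) : IsUnit B.det :=
  (isUnit_iff_isUnit_det B).mp hB.isUnit

theorem mulVec_nonsing_inv_mulVec_s7 {B : Matrix n n ℝ} (hB : IsUnit B.det) (x : n → ℝ) :
    B *ᵥ (B⁻¹ *ᵥ x) = x := by
  rw [mulVec_mulVec, mul_nonsing_inv B hB, one_mulVec]

theorem nonsing_inv_mulVec_sub_smul_mulVec {A B : Matrix n n ℝ} (hB : IsUnit B.det)
    (z : n → ℝ) (α : ℝ) : B⁻¹ *ᵥ ((A - α • B) *ᵥ z) = B⁻¹ *ᵥ (A *ᵥ z) - α • z := by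
  rw [sub_mulVec, smul_mulVec, mulVec_sub, mulVec_smul, mulVec_mulVec z B⁻¹ B,
    nonsing_inv_mul B hB, one_mulVec]

theorem IsHermitian.dotProduct_mul_nonsing_inv_mul_mulVec {A B : Matrix n n ℝ}
    (hA : A.IsHermitian) (hB : IsUnit B.det) (z : n → ℝ) :
    z ⬝ᵥ (A * B⁻¹ * A) *ᵥ z = (B⁻¹ *ᵥ (A *ᵥ z)) ⬝ᵥ B *ᵥ (B⁻¹ *ᵥ (A *ᵥ z)) := by
  rw [mulVec_nonsing_inv_mulVec_s7 hB, hA.dotProduct_mulVec_comm, ← mulVec_mulVec, ← mulVec_mulVec]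

theorem PosDef.dotProduct_nonsing_inv_mulVec_sub_smul {A B : Matrix n n ℝ}
    (hA : A.IsHermitian) (hB : B.PosDef) (z : n → ℝ) (α : ℝ) :
    (B⁻¹ *ᵥ (A *ᵥ z) - α • z) ⬝ᵥ B *ᵥ (B⁻¹ *ᵥ (A *ᵥ z) - α • z)
      = z ⬝ᵥ (A * B⁻¹ * A) *ᵥ z - 2 * α * (z ⬝ᵥ A *ᵥ z) + α ^ 2 * (z ⬝ᵥ B *ᵥ z) := by
  rw [hB.isHermitian.dotProduct_mulVec_sub_smul,
    hA.dotProduct_mul_nonsing_inv_mul_mulVec hB.isUnit_det,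
    mulVec_nonsing_inv_mulVec_s7 hB.isUnit_det]

theorem PosDef.dotProduct_mul_nonsing_inv_mul_mulVec_le {A B : Matrix n n ℝ}
    (hA : A.IsHermitian) (hB : B.PosDef) {νmin νmax : ℝ}
    (hν : ∀ z, νmin * (z ⬝ᵥ B *ᵥ z) ≤ z ⬝ᵥ A *ᵥ z ∧ z ⬝ᵥ A *ᵥ z ≤ νmax * (z ⬝ᵥ B *ᵥ z))
    (z : n → ℝ) :
    z ⬝ᵥ (A * B⁻¹ * A) *ᵥ z
      ≤ (νmin + νmax) * (z ⬝ᵥ A *ᵥ z) - νmin * νmax * (z ⬝ᵥ B *ᵥ z) := by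
  rw [hA.dotProduct_mul_nonsing_inv_mul_mulVec hB.isUnit_det]
  exact hB.posSemidef.dotProduct_mulVec_le_of_bounds hA hν
    (mulVec_nonsing_inv_mulVec_s7 hB.isUnit_det _)

end Matrix

theorem ciInf_quadratic {a b c : ℝ} (hb : 0 < b) :
    ⨅ α : ℝ, c - 2 * α * a + α ^ 2 * b = c - a ^ 2 / b := by
  have hform : ∀ α, c - 2 * α * a + α ^ 2 * b = c - a ^ 2 / b + b * (α - a / b) ^ 2 := fun α => by
    field_simp
    ring
  refine IsGLB.ciInf_eq (IsLeast.isGLB ⟨⟨a / b, by simp [hform]⟩, ?_⟩)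
  rintro _ ⟨α, rfl⟩
  dsimp only
  rw [hform]
  exact le_add_of_nonneg_right (by positivity)

theorem sub_sq_div_le_of_le_add_mul_sub_mul {a b c m M : ℝ} (hb : 0 < b) (hm : 0 ≤ m)
    (hmM : m ≤ M) (hc : c ≤ (m + M) * a - m * M * b) : c - a ^ 2 / b ≤ (M - m) * a := by
  rw [sub_div' hb.ne', div_le_iff₀ hb]
  -- the slack is (a - m b)² + m (M - m) b²
  nlinarith [mul_le_mul_of_nonneg_right hc hb.le, sq_nonneg (a - m * b),
    mul_nonneg (mul_nonneg hm (sub_nonneg.2 hmM)) (sq_nonneg b)]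

theorem statement_7_general {n : ℕ}
    (A B : Matrix (Fin n) (Fin n) ℝ)
    (hA : A.PosDef) (hB : B.PosDef)
    (νmin νmax : ℝ) (hνmin : 0 < νmin)
    (hν : ∀ z, νmin * (z ⬝ᵥ B *ᵥ z) ≤ z ⬝ᵥ A *ᵥ z ∧ z ⬝ᵥ A *ᵥ z ≤ νmax * (z ⬝ᵥ B *ᵥ z))
    (z : Fin n → ℝ) (hz : z ≠ 0) :
    z ⬝ᵥ (A * B⁻¹ * A) *ᵥ z - (z ⬝ᵥ A *ᵥ z) ^ 2 / (z ⬝ᵥ B *ᵥ z)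
        ≤ (νmax - νmin) * (z ⬝ᵥ A *ᵥ z) ∧
      (⨅ α : ℝ, Real.sqrt ((B⁻¹ *ᵥ ((A - α • B) *ᵥ z)) ⬝ᵥ B *ᵥ (B⁻¹ *ᵥ ((A - α • B) *ᵥ z))))
        ≤ Real.sqrt (νmax - νmin) * Real.sqrt (z ⬝ᵥ A *ᵥ z) ∧
      (⨅ α : ℝ, (B⁻¹ *ᵥ (A *ᵥ z) - α • z) ⬝ᵥ B *ᵥ (B⁻¹ *ᵥ (A *ᵥ z) - α • z))
        = z ⬝ᵥ (A * B⁻¹ * A) *ᵥ z - (z ⬝ᵥ A *ᵥ z) ^ 2 / (z ⬝ᵥ B *ᵥ z) := by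
  simp_rw [nonsing_inv_mulVec_sub_smul_mulVec hB.isUnit_det,
    hB.dotProduct_nonsing_inv_mulVec_sub_smul hA.isHermitian]
  have hkey := hB.dotProduct_mul_nonsing_inv_mul_mulVec_le hA.isHermitian hν z
  have hb : 0 < z ⬝ᵥ B *ᵥ z := by simpa using hB.dotProduct_mulVec_pos hz
  have hνle : νmin ≤ νmax := le_of_mul_le_mul_right ((hν z).1.trans (hν z).2) hb
  set a := z ⬝ᵥ A *ᵥ z
  set b := z ⬝ᵥ B *ᵥ z
  set c := z ⬝ᵥ (A * B⁻¹ * A) *ᵥ z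
  have hbound : c - a ^ 2 / b ≤ (νmax - νmin) * a :=
    sub_sq_div_le_of_le_add_mul_sub_mul hb hνmin.le hνle hkey
  refine ⟨hbound, ?_, ciInf_quadratic hb⟩
  calc ⨅ α : ℝ, √(c - 2 * α * a + α ^ 2 * b)
      ≤ √(c - 2 * (a / b) * a + (a / b) ^ 2 * b) :=
        ciInf_le ⟨0, by rintro _ ⟨α, rfl⟩; positivity⟩ (a / b)
    _ = √(c - a ^ 2 / b) := by
        congr 1
        field_simp
        ring
    _ ≤ √((νmax - νmin) * a) := Real.sqrt_le_sqrt hbound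
    _ = √(νmax - νmin) * √a := Real.sqrt_mul (sub_nonneg.2 hνle) a

/-- Bound on the best B-norm approximation of B⁻¹Az in the direction z. -/
theorem statement_7 {n : ℕ}
    (A B : Matrix (Fin n) (Fin n) ℝ)
    (hA : A.PosDef) (hB : B.PosDef)
    (νmin νmax : ℝ) (hνmin : 0 < νmin) (hνmax : 0 < νmax)
    (hν : ∀ z, νmin * (z ⬝ᵥ B *ᵥ z) ≤ z ⬝ᵥ A *ᵥ z ∧ z ⬝ᵥ A *ᵥ z ≤ νmax * (z ⬝ᵥ B *ᵥ z))
    (z : Fin n → ℝ) (hz : z ≠ 0) :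
    z ⬝ᵥ (A * B⁻¹ * A) *ᵥ z - (z ⬝ᵥ A *ᵥ z) ^ 2 / (z ⬝ᵥ B *ᵥ z)
        ≤ (νmax - νmin) * (z ⬝ᵥ A *ᵥ z) ∧
      (⨅ α : ℝ, Real.sqrt ((B⁻¹ *ᵥ ((A - α • B) *ᵥ z)) ⬝ᵥ B *ᵥ (B⁻¹ *ᵥ ((A - α • B) *ᵥ z))))
        ≤ Real.sqrt (νmax - νmin) * Real.sqrt (z ⬝ᵥ A *ᵥ z) ∧
      (⨅ α : ℝ, (B⁻¹ *ᵥ (A *ᵥ z) - α • z) ⬝ᵥ B *ᵥ (B⁻¹ *ᵥ (A *ᵥ z) - α • z))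
        = z ⬝ᵥ (A * B⁻¹ * A) *ᵥ z - (z ⬝ᵥ A *ᵥ z) ^ 2 / (z ⬝ᵥ B *ᵥ z) :=
  statement_7_general A B hA hB νmin νmax hνmin hν z hz
end

section
/- Suppose λ₁ ≤ ρ* < (λ₁+λ₂)/2. Let u₁ be the eigenvector of the pencil (A,M) for λ₁ normalized so that ‖u₁‖_A = 1, and set ν₁ = u₁ᵀA B⁻¹A u₁ / (u₁ᵀA u₁). Then for every nonzero x with f(x) ≤ ρ* and every nonzero v with vᵀB x = 0, |vᵀA x|/(‖v‖_A·‖x‖_A) ≤ ‖B⁻¹A u₁ − ν₁ u₁‖_A/ν_min + (ν₁/ν_min + √κ_ν)·√((λ₁⁻¹ − ρ*⁻¹)/(λ₁⁻¹ − λ₂⁻¹)). -/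
/-!
Write `x = w + s • u₁` with `w` `M`-orthogonal to `u 0`, which spans the eigenspace of the simple
eigenvalue `λ₁`. Then `|s| ≤ ‖x‖_A`, and since `w` lies in the span of the higher eigenvectors,
`λ₂ ‖w‖_M² ≤ ‖w‖_A²`; combined with `f(x) ≤ ρ*` this gives `‖w‖_A ≤ τ ‖x‖_A`, where `τ` is the
square root in the bound. For `r = B⁻¹ A u₁ - ν₁ u₁` the condition `vᵀ B x = 0` yields
`vᵀ A x = s vᵀ B r - ν₁ vᵀ B w + vᵀ A w`, and each term is estimated by Cauchy–Schwarz together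
with `|yᵀ B z| ≤ ‖y‖_A ‖z‖_A / ν_min`; finally `1 ≤ √κ_ν`.
-/

open Matrix

/- `a`, `m` play the roles of `‖w‖_A²`, `‖w‖_M²` and `c` of the squared `M`-coefficient of `x`
on the bottom eigenvector, so `a + l₀ * c = ‖x‖_A²`. -/
lemma le_div_mul_of_add_le_mul_add {l₀ l₁ ρ a m c : ℝ} (hl₀ : 0 < l₀) (hl : l₀ < l₁)
    (hρ : l₀ ≤ ρ) (hgap : l₁ * m ≤ a) (hx : a + l₀ * c ≤ ρ * (m + c)) :
    a ≤ (l₀⁻¹ - ρ⁻¹) / (l₀⁻¹ - l₁⁻¹) * (a + l₀ * c) := by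
  have hρ0 : 0 < ρ := hl₀.trans_le hρ
  have hl₁ : 0 < l₁ := hl₀.trans hl
  have hτ : (l₀⁻¹ - ρ⁻¹) / (l₀⁻¹ - l₁⁻¹) = l₁ * (ρ - l₀) / (ρ * (l₁ - l₀)) := by
    field_simp [(sub_pos.2 hl).ne']
  have key : (l₁ - ρ) * a ≤ l₁ * (ρ - l₀) * c := by
    nlinarith [mul_le_mul_of_nonneg_left hx hl₁.le, mul_le_mul_of_nonneg_left hgap hρ0.le]
  rw [hτ, div_mul_eq_mul_div, le_div_iff₀ (mul_pos hρ0 (sub_pos.2 hl))]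
  nlinarith [mul_le_mul_of_nonneg_left key hl₀.le]

namespace Matrix

variable {ι : Type*} [Fintype ι]

lemma IsSymm.dotProduct_mulVec_comm_s9 {S : Matrix ι ι ℝ} (hS : S.IsSymm) (v w : ι → ℝ) :
    v ⬝ᵥ S *ᵥ w = w ⬝ᵥ S *ᵥ v := by
  rw [← dotProduct_transpose_mulVec, hS.eq]

lemma IsSymm.dotProduct_mulVec_add_smul_self {S : Matrix ι ι ℝ} (hS : S.IsSymm) (w z : ι → ℝ)
    (c : ℝ) : (w + c • z) ⬝ᵥ S *ᵥ (w + c • z) =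
      w ⬝ᵥ S *ᵥ w + 2 * c * (z ⬝ᵥ S *ᵥ w) + c ^ 2 * (z ⬝ᵥ S *ᵥ z) := by
  simp only [mulVec_add, mulVec_smul, dotProduct_add, add_dotProduct, dotProduct_smul,
    smul_dotProduct, smul_eq_mul, hS.dotProduct_mulVec_comm_s9 w z]
  ring

lemma PosSemidef.abs_dotProduct_mulVec_le {S : Matrix ι ι ℝ} (hS : S.PosSemidef) (v w : ι → ℝ) :
    |v ⬝ᵥ S *ᵥ w| ≤ √(v ⬝ᵥ S *ᵥ v) * √(w ⬝ᵥ S *ᵥ w) := by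
  let := S.toSeminormedAddCommGroup hS
  let := S.toInnerProductSpace hS
  have hinner (a b : ι → ℝ) : (inner ℝ a b : ℝ) = a ⬝ᵥ S *ᵥ b := dotProduct_comm _ _
  simpa only [hinner, norm_eq_sqrt_real_inner] using abs_real_inner_le_norm v w

lemma PosSemidef.abs_dotProduct_mulVec_le_div {A B : Matrix ι ι ℝ} (hB : B.PosSemidef) {ν : ℝ}
    (hν : 0 < ν) (hBA : ∀ z, ν * (z ⬝ᵥ B *ᵥ z) ≤ z ⬝ᵥ A *ᵥ z) (y z : ι → ℝ) :
    |y ⬝ᵥ B *ᵥ z| ≤ √(y ⬝ᵥ A *ᵥ y) * √(z ⬝ᵥ A *ᵥ z) / ν := by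
  have hle (t : ι → ℝ) : √(t ⬝ᵥ B *ᵥ t) ≤ √(t ⬝ᵥ A *ᵥ t) / √ν := by
    rw [← Real.sqrt_div' _ hν.le]
    exact Real.sqrt_le_sqrt ((le_div_iff₀' hν).2 (hBA t))
  calc |y ⬝ᵥ B *ᵥ z| ≤ √(y ⬝ᵥ B *ᵥ y) * √(z ⬝ᵥ B *ᵥ z) := hB.abs_dotProduct_mulVec_le y z
    _ ≤ √(y ⬝ᵥ A *ᵥ y) / √ν * (√(z ⬝ᵥ A *ᵥ z) / √ν) :=
      mul_le_mul (hle y) (hle z) (Real.sqrt_nonneg _) (by positivity)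
    _ = √(y ⬝ᵥ A *ᵥ y) * √(z ⬝ᵥ A *ᵥ z) / ν := by
      rw [div_mul_div_comm, Real.mul_self_sqrt hν.le]

lemma dotProduct_mulVec_eq_of_eq_add_smul [DecidableEq ι] {A B : Matrix ι ι ℝ}
    (hB : IsUnit B) {u₁ v w x : ι → ℝ} {s : ℝ} (hx : x = w + s • u₁)
    (hvBx : v ⬝ᵥ B *ᵥ x = 0) (ν : ℝ) :
    v ⬝ᵥ A *ᵥ x = s * (v ⬝ᵥ B *ᵥ (B⁻¹ *ᵥ (A *ᵥ u₁) - ν • u₁)) - ν * (v ⬝ᵥ B *ᵥ w) +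
      v ⬝ᵥ A *ᵥ w := by
  have hvBw : v ⬝ᵥ B *ᵥ w = -(s * (v ⬝ᵥ B *ᵥ u₁)) := by
    rw [hx, mulVec_add, dotProduct_add, mulVec_smul, dotProduct_smul, smul_eq_mul] at hvBx
    linarith
  rw [hvBw, hx, mulVec_sub, mulVec_mulVec, mul_nonsing_inv B ((isUnit_iff_isUnit_det B).1 hB),
    one_mulVec]
  simp only [mulVec_add, mulVec_smul, dotProduct_add, dotProduct_sub, dotProduct_smul,
    smul_eq_mul]
  ring

lemma abs_dotProduct_mulVec_le_of_eq_add_smul [DecidableEq ι] {A B : Matrix ι ι ℝ}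
    (hA : A.PosSemidef) (hB : B.PosDef) {νmin : ℝ} (hνmin : 0 < νmin)
    (hBA : ∀ z, νmin * (z ⬝ᵥ B *ᵥ z) ≤ z ⬝ᵥ A *ᵥ z) {u₁ v w x : ι → ℝ} {s ν X T K : ℝ}
    (hx : x = w + s • u₁) (hvBx : v ⬝ᵥ B *ᵥ x = 0) (hν : 0 ≤ ν) (hs : |s| ≤ X)
    (hw : √(w ⬝ᵥ A *ᵥ w) ≤ T * X) (hK : 1 ≤ K) :
    |v ⬝ᵥ A *ᵥ x| ≤
      (√((B⁻¹ *ᵥ (A *ᵥ u₁) - ν • u₁) ⬝ᵥ A *ᵥ (B⁻¹ *ᵥ (A *ᵥ u₁) - ν • u₁)) / νmin +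
        (ν / νmin + K) * T) * (√(v ⬝ᵥ A *ᵥ v) * X) := by
  set r := B⁻¹ *ᵥ (A *ᵥ u₁) - ν • u₁
  set V := √(v ⬝ᵥ A *ᵥ v)
  have hBbd := hB.posSemidef.abs_dotProduct_mulVec_le_div hνmin hBA
  have hTX : 0 ≤ T * X := (Real.sqrt_nonneg _).trans hw
  have hV : 0 ≤ V := Real.sqrt_nonneg _
  have hr : |s * (v ⬝ᵥ B *ᵥ r)| ≤ X * (V * √(r ⬝ᵥ A *ᵥ r) / νmin) := by
    rw [abs_mul]; exact mul_le_mul hs (hBbd v r) (abs_nonneg _) ((abs_nonneg _).trans hs)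
  have hBw : |ν * (v ⬝ᵥ B *ᵥ w)| ≤ ν * (V * (T * X) / νmin) := by
    rw [abs_mul, abs_of_nonneg hν]
    exact mul_le_mul_of_nonneg_left ((hBbd v w).trans (by gcongr)) hν
  have hAw : |v ⬝ᵥ A *ᵥ w| ≤ K * (V * (T * X)) := calc
    |v ⬝ᵥ A *ᵥ w| ≤ V * √(w ⬝ᵥ A *ᵥ w) := hA.abs_dotProduct_mulVec_le v w
    _ ≤ V * (T * X) := by gcongr
    _ ≤ K * (V * (T * X)) := le_mul_of_one_le_left (by positivity) hK
  calc |v ⬝ᵥ A *ᵥ x|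
      ≤ |s * (v ⬝ᵥ B *ᵥ r)| + |ν * (v ⬝ᵥ B *ᵥ w)| + |v ⬝ᵥ A *ᵥ w| := by
        rw [dotProduct_mulVec_eq_of_eq_add_smul hB.isUnit hx hvBx ν]
        exact (abs_add_le _ _).trans (add_le_add_left (abs_sub _ _) _)
    _ ≤ X * (V * √(r ⬝ᵥ A *ᵥ r) / νmin) + ν * (V * (T * X) / νmin) + K * (V * (T * X)) := by
        gcongr
    _ = _ := by ring

section Eigenbasis

variable {A M : Matrix ι ι ℝ} {lam : ι → ℝ} {u : ι → ι → ℝ}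

lemma dotProduct_mulVec_eigenvector (hA : A.IsSymm) (hM : M.IsSymm)
    (heig : ∀ i, A *ᵥ u i = lam i • (M *ᵥ u i)) (i : ι) (y : ι → ℝ) :
    u i ⬝ᵥ A *ᵥ y = lam i * (u i ⬝ᵥ M *ᵥ y) := by
  rw [hA.dotProduct_mulVec_comm_s9, heig, dotProduct_smul, hM.dotProduct_mulVec_comm_s9, smul_eq_mul]

lemma dotProduct_mulVec_eq_zero_of_eigenvalue_ne (hA : A.IsSymm) (hM : M.IsSymm)
    (heig : ∀ i, A *ᵥ u i = lam i • (M *ᵥ u i)) {μ : ℝ} {y : ι → ℝ}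
    (hy : A *ᵥ y = μ • (M *ᵥ y)) {j : ι} (hj : lam j ≠ μ) :
    u j ⬝ᵥ M *ᵥ y = 0 := by
  have h := dotProduct_mulVec_eigenvector hA hM heig j y
  rw [hy, dotProduct_smul, smul_eq_mul] at h
  exact (mul_eq_mul_right_iff.1 h).resolve_left (Ne.symm hj)

variable [DecidableEq ι]

lemma dotProduct_mulVec_sum_smul_of_orthonormal
    (horth : ∀ i j, u i ⬝ᵥ M *ᵥ u j = if i = j then 1 else 0) (b : ι → ℝ) (j : ι) :
    u j ⬝ᵥ M *ᵥ ∑ i, b i • u i = b j := by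
  simp [mulVec_sum, dotProduct_sum, mulVec_smul, horth]

lemma eq_sum_smul_of_orthonormal
    (horth : ∀ i j, u i ⬝ᵥ M *ᵥ u j = if i = j then 1 else 0) (y : ι → ℝ) :
    y = ∑ i, (u i ⬝ᵥ M *ᵥ y) • u i := by
  have hli : LinearIndependent ℝ u := Fintype.linearIndependent_iff.2 fun b hb j => by
    simpa [hb] using (dotProduct_mulVec_sum_smul_of_orthonormal horth b j).symm
  have hspan := hli.span_eq_top_of_card_eq_finrank' (by simp)
  obtain ⟨b, rfl⟩ :=
    (Submodule.mem_span_range_iff_exists_fun ℝ).1 (hspan ▸ Submodule.mem_top (x := y))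
  simp only [dotProduct_mulVec_sum_smul_of_orthonormal horth]

lemma dotProduct_mulVec_self_eq_sum_sq
    (horth : ∀ i j, u i ⬝ᵥ M *ᵥ u j = if i = j then 1 else 0) (y : ι → ℝ) :
    y ⬝ᵥ M *ᵥ y = ∑ i, (u i ⬝ᵥ M *ᵥ y) ^ 2 := by
  nth_rewrite 1 [eq_sum_smul_of_orthonormal horth y]
  simp only [sum_dotProduct, smul_dotProduct, smul_eq_mul, sq]

lemma dotProduct_mulVec_self_eq_sum_mul_sq (hA : A.IsSymm) (hM : M.IsSymm)
    (heig : ∀ i, A *ᵥ u i = lam i • (M *ᵥ u i))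
    (horth : ∀ i j, u i ⬝ᵥ M *ᵥ u j = if i = j then 1 else 0) (y : ι → ℝ) :
    y ⬝ᵥ A *ᵥ y = ∑ i, lam i * (u i ⬝ᵥ M *ᵥ y) ^ 2 := by
  nth_rewrite 1 [eq_sum_smul_of_orthonormal horth y]
  simp only [sum_dotProduct, smul_dotProduct, smul_eq_mul,
    dotProduct_mulVec_eigenvector hA hM heig]
  exact Finset.sum_congr rfl fun i _ => by ring

lemma dotProduct_mulVec_add_smul_eigenvector (hA : A.IsSymm) (hM : M.IsSymm)
    (heig : ∀ i, A *ᵥ u i = lam i • (M *ᵥ u i))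
    (horth : ∀ i j, u i ⬝ᵥ M *ᵥ u j = if i = j then 1 else 0) {i : ι} {w : ι → ℝ}
    (hw : u i ⬝ᵥ M *ᵥ w = 0) (c : ℝ) :
    (w + c • u i) ⬝ᵥ A *ᵥ (w + c • u i) = w ⬝ᵥ A *ᵥ w + lam i * c ^ 2 ∧
      (w + c • u i) ⬝ᵥ M *ᵥ (w + c • u i) = w ⬝ᵥ M *ᵥ w + c ^ 2 := by
  have hii : u i ⬝ᵥ M *ᵥ u i = 1 := by simpa using horth i i
  rw [hA.dotProduct_mulVec_add_smul_self, hM.dotProduct_mulVec_add_smul_self,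
    dotProduct_mulVec_eigenvector hA hM heig, dotProduct_mulVec_eigenvector hA hM heig, hw, hii]
  constructor <;> ring

lemma eq_smul_of_eigenvalue_simple (hA : A.IsSymm) (hM : M.IsSymm)
    (heig : ∀ i, A *ᵥ u i = lam i • (M *ᵥ u i))
    (horth : ∀ i j, u i ⬝ᵥ M *ᵥ u j = if i = j then 1 else 0) {i₀ : ι}
    (hsimple : ∀ j, j ≠ i₀ → lam j ≠ lam i₀) {y : ι → ℝ} (hy : A *ᵥ y = lam i₀ • (M *ᵥ y)) :
    y = (u i₀ ⬝ᵥ M *ᵥ y) • u i₀ :=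
  (eq_sum_smul_of_orthonormal horth y).trans <| Finset.sum_eq_single i₀
    (fun j _ hj => by
      rw [dotProduct_mulVec_eq_zero_of_eigenvalue_ne hA hM heig hy (hsimple j hj), zero_smul])
    (by simp)

lemma mul_dotProduct_mulVec_le_of_orthogonal (hA : A.IsSymm) (hM : M.IsSymm)
    (heig : ∀ i, A *ᵥ u i = lam i • (M *ᵥ u i))
    (horth : ∀ i j, u i ⬝ᵥ M *ᵥ u j = if i = j then 1 else 0) {μ : ℝ} {w : ι → ℝ}
    (hw : ∀ j, lam j < μ → u j ⬝ᵥ M *ᵥ w = 0) :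
    μ * (w ⬝ᵥ M *ᵥ w) ≤ w ⬝ᵥ A *ᵥ w := by
  rw [dotProduct_mulVec_self_eq_sum_sq horth,
    dotProduct_mulVec_self_eq_sum_mul_sq hA hM heig horth, Finset.mul_sum]
  refine Finset.sum_le_sum fun j _ => ?_
  rcases lt_or_ge (lam j) μ with hj | hj
  · simp [hw j hj]
  · exact mul_le_mul_of_nonneg_right hj (sq_nonneg _)

end Eigenbasis

end Matrix

theorem exists_eq_add_smul_of_le_mul {n : ℕ} {A M : Matrix (Fin (n+2)) (Fin (n+2)) ℝ}
    (hA : A.PosSemidef) (hM : M.IsSymm) {lam : Fin (n+2) → ℝ} {u : Fin (n+2) → Fin (n+2) → ℝ}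
    (hlam : 0 < lam 0) (hgap : lam 0 < lam 1) (hmono : Monotone lam)
    (heig : ∀ i, A *ᵥ u i = lam i • (M *ᵥ u i))
    (horth : ∀ i j, u i ⬝ᵥ M *ᵥ u j = if i = j then 1 else 0) {u₁ : Fin (n+2) → ℝ}
    (heig₁ : A *ᵥ u₁ = lam 0 • (M *ᵥ u₁)) (hu₁A : u₁ ⬝ᵥ A *ᵥ u₁ = 1) {ρ : ℝ} {x : Fin (n+2) → ℝ}
    (hρ : lam 0 ≤ ρ) (hx : x ⬝ᵥ A *ᵥ x ≤ ρ * (x ⬝ᵥ M *ᵥ x)) :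
    ∃ s w, x = w + s • u₁ ∧ |s| ≤ √(x ⬝ᵥ A *ᵥ x) ∧
      √(w ⬝ᵥ A *ᵥ w) ≤ √(((lam 0)⁻¹ - ρ⁻¹) / ((lam 0)⁻¹ - (lam 1)⁻¹)) * √(x ⬝ᵥ A *ᵥ x) := by
  have hAs : A.IsSymm := isHermitian_iff_isSymm.1 hA.isHermitian
  have hlam_ge (j : Fin (n+2)) (hj : j ≠ 0) : lam 1 ≤ lam j := hmono (Fin.one_le_of_ne_zero hj)
  have hu00 : u 0 ⬝ᵥ M *ᵥ u 0 = 1 := by simpa using horth 0 0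
  set β := u 0 ⬝ᵥ M *ᵥ u₁
  have hu₁ : u₁ = β • u 0 := eq_smul_of_eigenvalue_simple hAs hM heig horth
    (fun j hj => (hgap.trans_le (hlam_ge j hj)).ne') heig₁
  have hβ : lam 0 * β ^ 2 = 1 := by
    rw [hu₁, ← zero_add (β • u 0),
      (dotProduct_mulVec_add_smul_eigenvector hAs hM heig horth (by simp) β).1] at hu₁A
    simpa using hu₁A
  set c := u 0 ⬝ᵥ M *ᵥ x
  set w := x - c • u 0
  have hxw : x = w + c • u 0 := (sub_add_cancel x _).symm
  have hw0 : u 0 ⬝ᵥ M *ᵥ w = 0 := by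
    simp [w, c, mulVec_sub, dotProduct_sub, mulVec_smul, hu00]
  obtain ⟨hxA, hxM⟩ := hxw ▸ dotProduct_mulVec_add_smul_eigenvector hAs hM heig horth hw0 c
  have hgapw : lam 1 * (w ⬝ᵥ M *ᵥ w) ≤ w ⬝ᵥ A *ᵥ w :=
    mul_dotProduct_mulVec_le_of_orthogonal hAs hM heig horth fun j hj => by
      obtain rfl : j = 0 := by_contra fun h => (hlam_ge j h).not_gt hj
      exact hw0
  have hwA : 0 ≤ w ⬝ᵥ A *ᵥ w := by simpa using hA.dotProduct_mulVec_nonneg w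
  have hτ : 0 ≤ ((lam 0)⁻¹ - ρ⁻¹) / ((lam 0)⁻¹ - (lam 1)⁻¹) :=
    div_nonneg (sub_nonneg.2 (inv_anti₀ hlam hρ)) (sub_nonneg.2 (inv_anti₀ hlam hgap.le))
  -- `lam 0 * β = β⁻¹`, so `s • u₁ = c • u 0`
  refine ⟨lam 0 * β * c, w, ?_, ?_, ?_⟩
  · rw [hxw, hu₁, smul_smul]
    congr 2
    linear_combination -c * hβ
  · refine Real.abs_le_sqrt ?_
    nlinarith [hβ]
  · rw [← Real.sqrt_mul hτ]
    refine Real.sqrt_le_sqrt ?_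
    rw [hxA]
    exact le_div_mul_of_add_le_mul_add hlam hgap hρ hgapw (hxA ▸ hxM ▸ hx)

theorem statement_9_general {n : ℕ}
    (A M B : Matrix (Fin (n+2)) (Fin (n+2)) ℝ)
    (hA : A.PosDef) (hM : M.PosDef) (hB : B.PosDef)
    (lam : Fin (n+2) → ℝ) (u : Fin (n+2) → (Fin (n+2) → ℝ))
    (hlam_pos : 0 < lam 0) (hgap : lam 0 < lam 1) (hmono : Monotone lam)
    (heig : ∀ i, A *ᵥ u i = lam i • (M *ᵥ u i))
    (horth : ∀ i j, u i ⬝ᵥ M *ᵥ u j = if i = j then 1 else 0)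
    (νmin νmax : ℝ) (hνmin : 0 < νmin)
    (hν : ∀ z, νmin * (z ⬝ᵥ B *ᵥ z) ≤ z ⬝ᵥ A *ᵥ z ∧ z ⬝ᵥ A *ᵥ z ≤ νmax * (z ⬝ᵥ B *ᵥ z))
    (ρstar : ℝ) (hρ1 : lam 0 ≤ ρstar)
    (u₁ : Fin (n+2) → ℝ)
    (heig₁ : A *ᵥ u₁ = lam 0 • (M *ᵥ u₁)) (hu₁A : u₁ ⬝ᵥ A *ᵥ u₁ = 1)
    (ν₁ : ℝ) (hν₁ : ν₁ = (u₁ ⬝ᵥ (A * B⁻¹ * A) *ᵥ u₁) / (u₁ ⬝ᵥ A *ᵥ u₁))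
    (x : Fin (n+2) → ℝ) (hx : x ≠ 0)
    (hfx : (x ⬝ᵥ A *ᵥ x) / (x ⬝ᵥ M *ᵥ x) ≤ ρstar)
    (v : Fin (n+2) → ℝ) (hvBx : v ⬝ᵥ B *ᵥ x = 0) :
    |v ⬝ᵥ A *ᵥ x| / (Real.sqrt (v ⬝ᵥ A *ᵥ v) * Real.sqrt (x ⬝ᵥ A *ᵥ x)) ≤
      Real.sqrt ((B⁻¹ *ᵥ (A *ᵥ u₁) - ν₁ • u₁) ⬝ᵥ A *ᵥ (B⁻¹ *ᵥ (A *ᵥ u₁) - ν₁ • u₁)) / νmin +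
        (ν₁ / νmin + Real.sqrt (νmax / νmin)) *
          Real.sqrt (((lam 0)⁻¹ - ρstar⁻¹) / ((lam 0)⁻¹ - (lam 1)⁻¹)) := by
  have hxρ : x ⬝ᵥ A *ᵥ x ≤ ρstar * (x ⬝ᵥ M *ᵥ x) :=
    (div_le_iff₀ (by simpa using hM.dotProduct_mulVec_pos hx)).1 hfx
  obtain ⟨s, w, hxw, hs, hw⟩ := exists_eq_add_smul_of_le_mul hA.posSemidef
    (isHermitian_iff_isSymm.1 hM.isHermitian) hlam_pos hgap hmono heig horth heig₁ hu₁A hρ1 hxρ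
  have hν₁_nonneg : 0 ≤ ν₁ := by
    have hABA : (A * B⁻¹ * A).PosSemidef := by
      simpa only [hA.isHermitian.eq] using hB.inv.posSemidef.conjTranspose_mul_mul_same A
    rw [hν₁]
    exact div_nonneg (by simpa using hABA.dotProduct_mulVec_nonneg u₁)
      (by simpa using hA.posSemidef.dotProduct_mulVec_nonneg u₁)
  have hκ : 1 ≤ √(νmax / νmin) := by
    have hxB : 0 < x ⬝ᵥ B *ᵥ x := by simpa using hB.dotProduct_mulVec_pos hx
    exact Real.one_le_sqrt.2 ((one_le_div hνmin).2
      (le_of_mul_le_mul_right ((hν x).1.trans (hν x).2) hxB))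
  refine div_le_of_le_mul₀ (by positivity) (add_nonneg (by positivity)
    (mul_nonneg (by positivity) (Real.sqrt_nonneg _))) ?_
  exact abs_dotProduct_mulVec_le_of_eq_add_smul hA.posSemidef hB hνmin (fun z => (hν z).1) hxw
    hvBx hν₁_nonneg hs hw hκ

/-- Decomposition bound for the leading angle. -/
theorem statement_9 {n : ℕ}
    (A M B : Matrix (Fin (n+2)) (Fin (n+2)) ℝ)
    (hA : A.PosDef) (hM : M.PosDef) (hB : B.PosDef)
    (lam : Fin (n+2) → ℝ) (u : Fin (n+2) → (Fin (n+2) → ℝ))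
    (hlam_pos : 0 < lam 0) (hgap : lam 0 < lam 1) (hmono : Monotone lam)
    (heig : ∀ i, A *ᵥ u i = lam i • (M *ᵥ u i))
    (horth : ∀ i j, u i ⬝ᵥ M *ᵥ u j = if i = j then 1 else 0)
    (νmin νmax : ℝ) (hνmin : 0 < νmin) (hνmax : 0 < νmax)
    (hν : ∀ z, νmin * (z ⬝ᵥ B *ᵥ z) ≤ z ⬝ᵥ A *ᵥ z ∧ z ⬝ᵥ A *ᵥ z ≤ νmax * (z ⬝ᵥ B *ᵥ z))
    (ρstar : ℝ) (hρ1 : lam 0 ≤ ρstar) (hρ2 : ρstar < (lam 0 + lam 1) / 2)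
    (u₁ : Fin (n+2) → ℝ)
    (heig₁ : A *ᵥ u₁ = lam 0 • (M *ᵥ u₁)) (hu₁A : u₁ ⬝ᵥ A *ᵥ u₁ = 1)
    (ν₁ : ℝ) (hν₁ : ν₁ = (u₁ ⬝ᵥ (A * B⁻¹ * A) *ᵥ u₁) / (u₁ ⬝ᵥ A *ᵥ u₁))
    (x : Fin (n+2) → ℝ) (hx : x ≠ 0)
    (hfx : (x ⬝ᵥ A *ᵥ x) / (x ⬝ᵥ M *ᵥ x) ≤ ρstar)
    (v : Fin (n+2) → ℝ) (hv : v ≠ 0) (hvBx : v ⬝ᵥ B *ᵥ x = 0) :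
    |v ⬝ᵥ A *ᵥ x| / (Real.sqrt (v ⬝ᵥ A *ᵥ v) * Real.sqrt (x ⬝ᵥ A *ᵥ x)) ≤
      Real.sqrt ((B⁻¹ *ᵥ (A *ᵥ u₁) - ν₁ • u₁) ⬝ᵥ A *ᵥ (B⁻¹ *ᵥ (A *ᵥ u₁) - ν₁ • u₁)) / νmin +
        (ν₁ / νmin + Real.sqrt (νmax / νmin)) *
          Real.sqrt (((lam 0)⁻¹ - ρstar⁻¹) / ((lam 0)⁻¹ - (lam 1)⁻¹)) :=
  statement_9_general A M B hA hM hB lam u hlam_pos hgap hmono heig horth νmin νmax hνmin hν ρstar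
    hρ1 u₁ heig₁ hu₁A ν₁ hν₁ x hx hfx v hvBx
end

section
/- Suppose λ₁ ≤ ρ < (λ₁+λ₂)/2. Let x and y be distinct unit vectors with xᵀu > 0, yᵀu > 0, xᵀAx ≤ ρ, and yᵀAy ≤ ρ. Set θ = arccos(xᵀy) and w = (y − (xᵀy)x)/‖y − (xᵀy)x‖, and let γ(t) = cos(tθ)·x + sin(tθ)·w be the minimal great-circle arc from x to y. Then for every t ∈ [0,1]: ‖γ(t)‖ = 1, γ(t)ᵀu > 0, and γ(t)ᵀA γ(t) ≤ ρ. (That is, the set {x : ‖x‖ = 1, xᵀu > 0, xᵀAx ≤ ρ} is geodesically convex on the unit sphere.) -/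
open Matrix

private lemma sin_add_le' {a b : ℝ} (ha : 0 ≤ a) (hb : 0 ≤ b) (hab : a + b ≤ Real.pi) :
    Real.sin (a + b) ≤ Real.sin a + Real.sin b := by
  have h1 : 0 ≤ Real.sin a := Real.sin_nonneg_of_nonneg_of_le_pi ha (by linarith)
  have h2 : 0 ≤ Real.sin b := Real.sin_nonneg_of_nonneg_of_le_pi hb (by linarith)
  rw [Real.sin_add]
  nlinarith [mul_nonneg h1 (sub_nonneg.2 (Real.cos_le_one b)),
    mul_nonneg h2 (sub_nonneg.2 (Real.cos_le_one a))]

private lemma sinusoid' {β P Q Δ ψ : ℝ} (hβ : 0 ≤ β) (hΔ0 : 0 < Δ) (hΔπ : Δ < Real.pi)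
    (h0 : β + P ≤ 0) (h1 : β + P * Real.cos Δ + Q * Real.sin Δ ≤ 0)
    (hψ0 : 0 ≤ ψ) (hψΔ : ψ ≤ Δ) : β + P * Real.cos ψ + Q * Real.sin ψ ≤ 0 := by
  have hsΔ : 0 < Real.sin Δ := Real.sin_pos_of_pos_of_lt_pi hΔ0 hΔπ
  have hs1 : 0 ≤ Real.sin (Δ - ψ) :=
    Real.sin_nonneg_of_nonneg_of_le_pi (by linarith) (by linarith)
  have hs2 : 0 ≤ Real.sin ψ := Real.sin_nonneg_of_nonneg_of_le_pi hψ0 (by linarith)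
  have hsum : Real.sin Δ ≤ Real.sin (Δ - ψ) + Real.sin ψ := by
    have := sin_add_le' (a := Δ - ψ) (b := ψ) (by linarith) hψ0 (by linarith)
    simpa using this
  have key : Real.sin Δ * (β + P * Real.cos ψ + Q * Real.sin ψ)
      = Real.sin (Δ - ψ) * (β + P) + Real.sin ψ * (β + P * Real.cos Δ + Q * Real.sin Δ)
        - β * (Real.sin (Δ - ψ) + Real.sin ψ - Real.sin Δ) := by
    rw [Real.sin_sub]; ring
  nlinarith [mul_nonneg hs1 (neg_nonneg.2 h0), mul_nonneg hs2 (neg_nonneg.2 h1),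
    mul_nonneg hβ (sub_nonneg.2 hsum)]

set_option maxHeartbeats 2000000 in
/-- Geodesic convexity of the sublevel set of the quadratic form on the unit sphere. -/
theorem statement_12 {n : ℕ} (hn : 2 ≤ n)
    (A : Matrix (Fin n) (Fin n) ℝ) (hA : A.IsSymm)
    (lam₁ lam₂ : ℝ) (hgap : lam₁ < lam₂)
    (u : Fin n → ℝ) (hu : u ⬝ᵥ u = 1) (heig : A *ᵥ u = lam₁ • u)
    (hrest : ∀ w : Fin n → ℝ, w ⬝ᵥ u = 0 → lam₂ * (w ⬝ᵥ w) ≤ w ⬝ᵥ A *ᵥ w)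
    (ρ : ℝ) (hρ1 : lam₁ ≤ ρ) (hρ2 : ρ < (lam₁ + lam₂) / 2)
    (x y : Fin n → ℝ) (hxy : x ≠ y)
    (hxunit : x ⬝ᵥ x = 1) (hyunit : y ⬝ᵥ y = 1)
    (hxu : 0 < x ⬝ᵥ u) (hyu : 0 < y ⬝ᵥ u)
    (hxA : x ⬝ᵥ A *ᵥ x ≤ ρ) (hyA : y ⬝ᵥ A *ᵥ y ≤ ρ)
    (θ : ℝ) (hθ : θ = Real.arccos (x ⬝ᵥ y))
    (w : Fin n → ℝ)
    (hw : w = (Real.sqrt ((y - (x ⬝ᵥ y) • x) ⬝ᵥ (y - (x ⬝ᵥ y) • x)))⁻¹ • (y - (x ⬝ᵥ y) • x))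
    (γ : ℝ → Fin n → ℝ)
    (hγ : ∀ t : ℝ, γ t = Real.cos (t * θ) • x + Real.sin (t * θ) • w) :
    ∀ t ∈ Set.Icc (0 : ℝ) 1,
      γ t ⬝ᵥ γ t = 1 ∧ 0 < γ t ⬝ᵥ u ∧ γ t ⬝ᵥ A *ᵥ γ t ≤ ρ := by
  have symm : ∀ v z : Fin n → ℝ, v ⬝ᵥ A *ᵥ z = z ⬝ᵥ A *ᵥ v := by
    intro v z
    conv_lhs => rw [dotProduct_mulVec, ← hA.eq, vecMul_transpose]
    exact dotProduct_comm _ _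
  have dps : ∀ v : Fin n → ℝ, 0 ≤ v ⬝ᵥ v := fun v => by
    simpa [dotProduct] using Finset.sum_nonneg (fun i _ => mul_self_nonneg (v i))
  have uAu : u ⬝ᵥ A *ᵥ u = lam₁ := by
    rw [heig, dotProduct_smul, smul_eq_mul, hu, mul_one]
  -- decomposition facts for a vector v
  have hpu : ∀ v : Fin n → ℝ, (v - (v ⬝ᵥ u) • u) ⬝ᵥ u = 0 := by
    intro v
    simp [sub_dotProduct, smul_dotProduct, hu, smul_eq_mul]
  have hpp : ∀ v : Fin n → ℝ, (v - (v ⬝ᵥ u) • u) ⬝ᵥ (v - (v ⬝ᵥ u) • u)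
      = v ⬝ᵥ v - (v ⬝ᵥ u)^2 := by
    intro v
    simp only [sub_dotProduct, dotProduct_sub, smul_dotProduct, dotProduct_smul, smul_eq_mul,
      hu, dotProduct_comm u v]
    ring
  have hsq_le : ∀ v : Fin n → ℝ, (v ⬝ᵥ u)^2 ≤ v ⬝ᵥ v := by
    intro v
    have h := dps (v - (v ⬝ᵥ u) • u)
    rw [hpp v] at h; linarith
  have decomp : ∀ v : Fin n → ℝ,
      lam₁ * (v ⬝ᵥ u)^2 + lam₂ * (v ⬝ᵥ v - (v ⬝ᵥ u)^2) ≤ v ⬝ᵥ A *ᵥ v := by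
    intro v
    set a := v ⬝ᵥ u with ha
    set p := v - a • u with hp
    have hpAu : p ⬝ᵥ A *ᵥ u = 0 := by
      rw [heig, dotProduct_smul, smul_eq_mul, hpu v, mul_zero]
    have huAp : u ⬝ᵥ A *ᵥ p = 0 := by rw [symm u p, hpAu]
    have hvAv : v ⬝ᵥ A *ᵥ v = lam₁ * a^2 + p ⬝ᵥ A *ᵥ p := by
      have hv' : v = p + a • u := by rw [hp]; abel
      calc v ⬝ᵥ A *ᵥ v = (p + a • u) ⬝ᵥ A *ᵥ (p + a • u) := by rw [← hv']
        _ = lam₁ * a^2 + p ⬝ᵥ A *ᵥ p := by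
            simp only [mulVec_add, mulVec_smul, dotProduct_add, add_dotProduct,
              dotProduct_smul, smul_dotProduct, smul_eq_mul, hpAu, huAp, uAu]
            ring
    have h2 := hrest p (hpu v)
    rw [hpp v] at h2
    linarith [hvAv, h2]
  -- minimum eigenvalue bound
  have globmin : ∀ v : Fin n → ℝ, lam₁ * (v ⬝ᵥ v) ≤ v ⬝ᵥ A *ᵥ v := by
    intro v
    have h1 := decomp v
    have h2 := hsq_le v
    nlinarith
  -- cap bound
  have cap : ∀ v : Fin n → ℝ, v ⬝ᵥ v = 1 → v ⬝ᵥ A *ᵥ v ≤ ρ → 1/2 < (v ⬝ᵥ u)^2 := by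
    intro v hv hvA
    have h1 := decomp v
    rw [hv] at h1
    have h2 := hsq_le v
    rw [hv] at h2
    nlinarith
  have hxu2 : 1/2 < (x ⬝ᵥ u)^2 := cap x hxunit hxA
  have hyu2 : 1/2 < (y ⬝ᵥ u)^2 := cap y hyunit hyA
  -- x ⬝ᵥ y ∈ (0, 1)
  set cxy := x ⬝ᵥ y with hcxy
  have hcs : ∀ p q : Fin n → ℝ, (p ⬝ᵥ q)^2 ≤ (p ⬝ᵥ p) * (q ⬝ᵥ q) := by
    intro p q
    simpa [dotProduct, sq] using Finset.sum_mul_sq_le_sq_mul_sq Finset.univ p q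
  have hcxy_pos : 0 < cxy := by
    set a := x ⬝ᵥ u
    set b := y ⬝ᵥ u
    set p := x - a • u with hps
    set q := y - b • u with hqs
    have hpq : p ⬝ᵥ q = cxy - a * b := by
      simp only [hps, hqs, sub_dotProduct, dotProduct_sub, smul_dotProduct, dotProduct_smul,
        smul_eq_mul, hu, dotProduct_comm u y]
      ring
    have hppv : p ⬝ᵥ p = 1 - a^2 := by rw [hps, hpp x, hxunit]
    have hqqv : q ⬝ᵥ q = 1 - b^2 := by rw [hqs, hpp y, hyunit]
    have hcs' := hcs p q
    rw [hpq, hppv, hqqv] at hcs'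
    have ha1 : a^2 ≤ 1 := by rw [← hxunit]; exact hsq_le x
    have hb1 : b^2 ≤ 1 := by rw [← hyunit]; exact hsq_le y
    nlinarith [mul_pos hxu hyu, sq_nonneg (cxy - a*b), sq_nonneg (cxy + a*b)]
  have hcxy_lt : cxy < 1 := by
    have hne : x - y ≠ 0 := sub_ne_zero.2 hxy
    have hpos : 0 < (x - y) ⬝ᵥ (x - y) := by
      rcases (dps (x - y)).lt_or_eq with h | h
      · exact h
      · exact absurd ((dotProduct_self_eq_zero).mp h.symm) hne
    have : (x - y) ⬝ᵥ (x - y) = 2 - 2 * cxy := by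
      simp only [sub_dotProduct, dotProduct_sub, hxunit, hyunit, dotProduct_comm y x, ← hcxy]
      ring
    linarith [this ▸ hpos]
  -- θ facts
  have hcos : Real.cos θ = cxy := by
    rw [hθ]; exact Real.cos_arccos (by linarith) (by linarith)
  have hθ0 : 0 < θ := by rw [hθ]; exact Real.arccos_pos.2 hcxy_lt
  have hθlt : θ < Real.pi / 2 := by rw [hθ]; exact Real.arccos_lt_pi_div_two.2 hcxy_pos
  have hsin : Real.sin θ = Real.sqrt (1 - cxy^2) := by rw [hθ]; exact Real.sin_arccos _
  set m := Real.sqrt (1 - cxy^2) with hm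
  have hm2 : m^2 = 1 - cxy^2 := Real.sq_sqrt (by nlinarith)
  have hmpos : 0 < m := Real.sqrt_pos.2 (by nlinarith)
  -- w facts
  set D := y - cxy • x with hD
  have hDD : D ⬝ᵥ D = 1 - cxy^2 := by
    simp only [hD, sub_dotProduct, dotProduct_sub, smul_dotProduct, dotProduct_smul,
      smul_eq_mul, hxunit, hyunit, dotProduct_comm y x, ← hcxy]
    ring
  have hwD : w = m⁻¹ • D := by rw [hw, hDD, ← hm]
  have hmw : m • w = D := by
    rw [hwD, smul_smul, mul_inv_cancel₀ (ne_of_gt hmpos), one_smul]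
  have hww : w ⬝ᵥ w = 1 := by
    have h1 : (m • w) ⬝ᵥ (m • w) = 1 - cxy^2 := by rw [hmw, hDD]
    simp only [smul_dotProduct, dotProduct_smul, smul_eq_mul] at h1
    have hne : m^2 ≠ 0 := by positivity
    have h2 : m^2 * (w ⬝ᵥ w) = m^2 * 1 := by
      rw [mul_one]; linear_combination h1 - hm2
    exact mul_left_cancel₀ hne h2
  have hxw : x ⬝ᵥ w = 0 := by
    have : x ⬝ᵥ (m • w) = 0 := by
      rw [hmw, hD]
      simp only [dotProduct_sub, dotProduct_smul, smul_eq_mul, hxunit, ← hcxy]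
      ring
    simp only [dotProduct_smul, smul_eq_mul] at this
    rcases mul_eq_zero.mp this with h | h
    · exact absurd h (ne_of_gt hmpos)
    · exact h
  have hyrep : y = cxy • x + m • w := by rw [hmw, hD]; abel
  -- abbreviations
  set a := x ⬝ᵥ u with ha
  set b := y ⬝ᵥ u with hb
  set cwu := w ⬝ᵥ u with hcwu
  have hmcwu : m * cwu = b - cxy * a := by
    have : (m • w) ⬝ᵥ u = b - cxy * a := by
      rw [hmw, hD]
      simp only [sub_dotProduct, smul_dotProduct, smul_eq_mul, ← ha, ← hb]
    simpa [smul_dotProduct, smul_eq_mul, ← hcwu] using this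
  set c₁ := x ⬝ᵥ A *ᵥ x with hc₁
  set c₂ := w ⬝ᵥ A *ᵥ w with hc₂
  set c₃ := x ⬝ᵥ A *ᵥ w with hc₃
  have hwAx : w ⬝ᵥ A *ᵥ x = c₃ := (symm x w).symm
  -- trace bound : lam₁ + lam₂ ≤ c₁ + c₂
  have trace : lam₁ + lam₂ ≤ c₁ + c₂ := by
    set z := cwu • x - a • w with hz
    set z' := a • x + cwu • w with hz'
    have hzu : z ⬝ᵥ u = 0 := by
      simp only [hz, sub_dotProduct, smul_dotProduct, smul_eq_mul, ← ha, ← hcwu]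
      ring
    have hzz : z ⬝ᵥ z = cwu^2 + a^2 := by
      simp only [hz, sub_dotProduct, dotProduct_sub, smul_dotProduct, dotProduct_smul,
        smul_eq_mul, hxunit, hww, hxw, dotProduct_comm w x]
      ring
    have hz'z' : z' ⬝ᵥ z' = a^2 + cwu^2 := by
      simp only [hz', add_dotProduct, dotProduct_add, smul_dotProduct, dotProduct_smul,
        smul_eq_mul, hxunit, hww, hxw, dotProduct_comm w x]
      ring
    have hzA := hrest z hzu
    have hz'A := globmin z'
    have hsum : z ⬝ᵥ A *ᵥ z + z' ⬝ᵥ A *ᵥ z' = (a^2 + cwu^2) * (c₁ + c₂) := by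
      simp only [hz, hz', mulVec_smul, mulVec_sub, mulVec_add, sub_dotProduct,
        dotProduct_sub, add_dotProduct, dotProduct_add, dotProduct_smul, smul_dotProduct,
        smul_eq_mul, ← hc₁, ← hc₂, ← hc₃, hwAx]
      ring
    have hapos : 0 < a^2 + cwu^2 := by positivity
    rw [hzz] at hzA
    rw [hz'z'] at hz'A
    have h4 := add_le_add hzA hz'A
    rw [hsum] at h4
    have h5 : (lam₁ + lam₂) * (a^2 + cwu^2) ≤ (c₁ + c₂) * (a^2 + cwu^2) := by
      ring_nf
      ring_nf at h4
      linarith only [h4]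
    exact le_of_mul_le_mul_right h5 hapos
  -- quadratic form along the circle
  have hq : ∀ s : ℝ, (Real.cos s • x + Real.sin s • w) ⬝ᵥ A *ᵥ (Real.cos s • x + Real.sin s • w)
      = c₁ * Real.cos s^2 + 2 * c₃ * Real.cos s * Real.sin s + c₂ * Real.sin s^2 := by
    intro s
    simp only [mulVec_add, mulVec_smul, dotProduct_add, add_dotProduct, dotProduct_smul,
      smul_dotProduct, smul_eq_mul, ← hc₁, ← hc₂, ← hc₃, hwAx]
    ring
  have hgu : ∀ s : ℝ, (Real.cos s • x + Real.sin s • w) ⬝ᵥ u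
      = Real.cos s * a + Real.sin s * cwu := by
    intro s
    simp only [add_dotProduct, smul_dotProduct, smul_eq_mul, ← ha, ← hcwu]
  have hgg : ∀ s : ℝ, (Real.cos s • x + Real.sin s • w) ⬝ᵥ (Real.cos s • x + Real.sin s • w)
      = 1 := by
    intro s
    simp only [dotProduct_add, add_dotProduct, dotProduct_smul, smul_dotProduct, smul_eq_mul,
      hxunit, hww, hxw, dotProduct_comm w x]
    linear_combination Real.sin_sq_add_cos_sq s
  -- endpoint value
  have hy1 : Real.cos θ • x + Real.sin θ • w = y := by
    rw [hcos, hsin]; exact hyrep.symm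
  have hend : c₁ * Real.cos θ^2 + 2 * c₃ * Real.cos θ * Real.sin θ + c₂ * Real.sin θ^2 ≤ ρ := by
    have h2 := hq θ
    rw [hy1] at h2
    rw [← h2]; exact hyA
  -- sinusoid data
  set β := (c₁ + c₂)/2 - ρ with hβdef
  set P := (c₁ - c₂)/2 with hPdef
  set Q := c₃ with hQdef
  have hβ : 0 ≤ β := by rw [hβdef]; linarith [trace]
  have hl0 : β + P ≤ 0 := by rw [hβdef, hPdef]; linarith [hxA]
  have pyth : ∀ s : ℝ, Real.sin s^2 = 1 - Real.cos s^2 := fun s => by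
    linarith [Real.sin_sq_add_cos_sq s]
  have hform : ∀ s : ℝ, β + P * Real.cos (2*s) + Q * Real.sin (2*s)
      = c₁ * Real.cos s^2 + 2 * c₃ * Real.cos s * Real.sin s + c₂ * Real.sin s^2 - ρ := by
    intro s
    rw [Real.cos_two_mul, Real.sin_two_mul, hβdef, hPdef, hQdef]
    linear_combination (- c₂) * pyth s
  have hlΔ : β + P * Real.cos (2*θ) + Q * Real.sin (2*θ) ≤ 0 := by
    rw [hform θ]; linarith [hend]
  have hpi := Real.pi_pos
  -- conclusion
  intro t ht
  obtain ⟨ht0, ht1⟩ := ht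
  have hsθ0 : 0 ≤ t * θ := mul_nonneg ht0 hθ0.le
  have hsθΔ : t * θ ≤ θ := by nlinarith only [ht1, hθ0, ht0]
  refine ⟨?_, ?_, ?_⟩
  · rw [hγ t]; exact hgg (t*θ)
  · rw [hγ t, hgu (t*θ)]
    set s := t * θ with hs
    have h1 : m * (Real.cos s * a + Real.sin s * cwu)
        = a * Real.sin (θ - s) + b * Real.sin s := by
      rw [Real.sin_sub, hsin, hcos]
      linear_combination Real.sin s * hmcwu
    have hs1 : 0 ≤ Real.sin (θ - s) :=
      Real.sin_nonneg_of_nonneg_of_le_pi (by linarith) (by linarith)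
    have hs2 : 0 ≤ Real.sin s := Real.sin_nonneg_of_nonneg_of_le_pi hsθ0 (by linarith)
    have hsum : Real.sin θ ≤ Real.sin (θ - s) + Real.sin s := by
      have h7 := sin_add_le' (a := θ - s) (b := s) (by linarith) hsθ0
        (by rw [sub_add_cancel]; linarith)
      rwa [sub_add_cancel] at h7
    have hsum' : 0 < Real.sin (θ - s) + Real.sin s := by rw [hsin] at hsum; linarith
    have hpos2 : 0 < a * Real.sin (θ - s) + b * Real.sin s := by
      rcases lt_or_ge 0 (Real.sin s) with h | h
      · have e1 := mul_pos hyu h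
        have e2 := mul_nonneg hxu.le hs1
        linarith
      · have hS1 : 0 < Real.sin (θ - s) := by linarith
        have e1 := mul_pos hxu hS1
        have e2 := mul_nonneg hyu.le hs2
        linarith
    by_contra hcon
    push_neg at hcon
    have h6 : m * (Real.cos s * a + Real.sin s * cwu) ≤ 0 :=
      mul_nonpos_of_nonneg_of_nonpos hmpos.le hcon
    rw [h1] at h6
    linarith
  · rw [hγ t, hq (t*θ)]
    have hl := sinusoid' (β := β) (P := P) (Q := Q) (Δ := 2*θ) (ψ := 2*(t*θ)) hβ
      (by linarith) (by linarith) hl0 hlΔ (by linarith) (by linarith)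
    rw [hform (t*θ)] at hl
    linarith
end

section
/- Suppose λ₁ ≤ ρ < (λ₁+λ₂)/2. Let x be a unit vector with xᵀAx ≤ ρ, and let v be any vector with vᵀx = 0 (a tangent vector to the unit sphere at x). Then 2(λ₁ + λ₂ − 2ρ)·‖v‖² ≤ 2(vᵀAv − (xᵀAx)·‖v‖²) ≤ 2(λₙ − λ₁)·‖v‖², where the middle quantity is the Hessian quadratic form ⟨v, ∇²f(x)[v]⟩ of the function f(x) = xᵀAx restricted to the unit sphere. -/
open Matrix

set_option maxHeartbeats 1000000 in
/-- Bounds on the Hessian quadratic form of the quadratic Rayleigh function on the sphere. -/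
theorem statement_13 {n : ℕ} (hn : 2 ≤ n)
    (A : Matrix (Fin n) (Fin n) ℝ) (hA : A.IsSymm)
    (lam₁ lam₂ lamn : ℝ) (hgap : lam₁ < lam₂) (h2n : lam₂ ≤ lamn)
    (u : Fin n → ℝ) (hu : u ⬝ᵥ u = 1) (heig : A *ᵥ u = lam₁ • u)
    (hrest : ∀ w : Fin n → ℝ, w ⬝ᵥ u = 0 → lam₂ * (w ⬝ᵥ w) ≤ w ⬝ᵥ A *ᵥ w)
    (hupper : ∀ w : Fin n → ℝ, w ⬝ᵥ A *ᵥ w ≤ lamn * (w ⬝ᵥ w))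
    (ρ : ℝ) (hρ1 : lam₁ ≤ ρ) (hρ2 : ρ < (lam₁ + lam₂) / 2)
    (x : Fin n → ℝ) (hxunit : x ⬝ᵥ x = 1) (hxA : x ⬝ᵥ A *ᵥ x ≤ ρ)
    (v : Fin n → ℝ) (hvx : v ⬝ᵥ x = 0) :
    2 * (lam₁ + lam₂ - 2 * ρ) * (v ⬝ᵥ v) ≤
        2 * (v ⬝ᵥ A *ᵥ v - (x ⬝ᵥ A *ᵥ x) * (v ⬝ᵥ v)) ∧
      2 * (v ⬝ᵥ A *ᵥ v - (x ⬝ᵥ A *ᵥ x) * (v ⬝ᵥ v)) ≤ 2 * (lamn - lam₁) * (v ⬝ᵥ v) := by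
  set c : ℝ := x ⬝ᵥ u with hc
  set a : ℝ := v ⬝ᵥ u with ha
  set y : Fin n → ℝ := x - c • u with hy
  set w : Fin n → ℝ := v - a • u with hw
  clear_value c a y w
  have hsymm : ∀ z z' : Fin n → ℝ, z ⬝ᵥ A *ᵥ z' = z' ⬝ᵥ A *ᵥ z := by
    intro z z'
    rw [dotProduct_mulVec, ← mulVec_transpose, hA.eq, dotProduct_comm]
  have hxAu : x ⬝ᵥ A *ᵥ u = lam₁ * c := by
    rw [heig, dotProduct_smul, smul_eq_mul, hc]
  have hvAu : v ⬝ᵥ A *ᵥ u = lam₁ * a := by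
    rw [heig, dotProduct_smul, smul_eq_mul, ha]
  -- expansions
  have hyu : y ⬝ᵥ u = 0 := by
    simp [hy, sub_dotProduct, smul_dotProduct, hu, smul_eq_mul, ← hc]
  have hwu : w ⬝ᵥ u = 0 := by
    simp [hw, sub_dotProduct, smul_dotProduct, hu, smul_eq_mul, ← ha]
  have hyy : y ⬝ᵥ y = 1 - c ^ 2 := by
    simp only [hy, sub_dotProduct, dotProduct_sub, smul_dotProduct, dotProduct_smul,
      smul_eq_mul, hxunit, hu, dotProduct_comm u x, ← hc]
    ring
  have hww : w ⬝ᵥ w = v ⬝ᵥ v - a ^ 2 := by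
    simp only [hw, sub_dotProduct, dotProduct_sub, smul_dotProduct, dotProduct_smul,
      smul_eq_mul, hu, dotProduct_comm u v, ← ha]
    ring
  have hwy : w ⬝ᵥ y = -(a * c) := by
    simp only [hw, hy, sub_dotProduct, dotProduct_sub, smul_dotProduct, dotProduct_smul,
      smul_eq_mul, hu, hvx, dotProduct_comm u x, dotProduct_comm u v, ← ha, ← hc]
    ring
  have hyAy : y ⬝ᵥ A *ᵥ y = x ⬝ᵥ A *ᵥ x - lam₁ * c ^ 2 := by
    have huAx : u ⬝ᵥ A *ᵥ x = lam₁ * c := by rw [hsymm u x, hxAu]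
    simp only [hy, mulVec_sub, mulVec_smul, sub_dotProduct, dotProduct_sub,
      smul_dotProduct, dotProduct_smul, smul_eq_mul, hxAu, huAx, heig, hu,
      dotProduct_comm u x, ← hc]
    ring
  have hwAw : w ⬝ᵥ A *ᵥ w = v ⬝ᵥ A *ᵥ v - lam₁ * a ^ 2 := by
    have huAv : u ⬝ᵥ A *ᵥ v = lam₁ * a := by rw [hsymm u v, hvAu]
    simp only [hw, mulVec_sub, mulVec_smul, sub_dotProduct, dotProduct_sub,
      smul_dotProduct, dotProduct_smul, smul_eq_mul, hvAu, huAv, heig, hu,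
      dotProduct_comm u v, ← ha]
    ring
  -- inequalities
  have h1 : lam₂ * (1 - c ^ 2) ≤ x ⬝ᵥ A *ᵥ x - lam₁ * c ^ 2 := by
    have := hrest y hyu
    rwa [hyy, hyAy] at this
  have h2 : lam₂ * (v ⬝ᵥ v - a ^ 2) ≤ v ⬝ᵥ A *ᵥ v - lam₁ * a ^ 2 := by
    have := hrest w hwu
    rwa [hww, hwAw] at this
  have hnn : ∀ z : Fin n → ℝ, (0:ℝ) ≤ z ⬝ᵥ z := by
    intro z
    exact Finset.sum_nonneg fun i _ => mul_self_nonneg _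
  have hV : (0:ℝ) ≤ v ⬝ᵥ v := hnn v
  have hW : (0:ℝ) ≤ v ⬝ᵥ v - a ^ 2 := by rw [← hww]; exact hnn w
  have hT : (0:ℝ) ≤ 1 - c ^ 2 := by rw [← hyy]; exact hnn y
  -- Cauchy-Schwarz: (w ⬝ᵥ y)^2 ≤ (w ⬝ᵥ w) * (y ⬝ᵥ y)
  have hcs : (a * c) ^ 2 ≤ (v ⬝ᵥ v - a ^ 2) * (1 - c ^ 2) := by
    have hcs' : (w ⬝ᵥ y) ^ 2 ≤ (w ⬝ᵥ w) * (y ⬝ᵥ y) := by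
      have h := Finset.sum_mul_sq_le_sq_mul_sq Finset.univ w y
      simpa [dotProduct, pow_two, Finset.sum_mul, mul_pow] using h
    rw [hwy, hww, hyy] at hcs'
    simpa using hcs'
  have ha2 : a ^ 2 ≤ (1 - c ^ 2) * (v ⬝ᵥ v) := by nlinarith [hcs, hT, hW]
  have hgapb : (lam₂ - lam₁) * (1 - c ^ 2) ≤ ρ - lam₁ := by nlinarith [h1, hxA]
  have hkey : (lam₂ - lam₁) * a ^ 2 ≤ (ρ - lam₁) * (v ⬝ᵥ v) := by
    have e1 := mul_le_mul_of_nonneg_right hgapb hV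
    have e2 := mul_le_mul_of_nonneg_left ha2 (le_of_lt (sub_pos.mpr hgap))
    ring_nf at e1 e2 ⊢
    linarith [e1, e2]
  have hXlow : lam₁ ≤ x ⬝ᵥ A *ᵥ x := by nlinarith [h1, mul_le_mul_of_nonneg_right (le_of_lt hgap) hT]
  constructor
  · have hxv := mul_le_mul_of_nonneg_right hxA hV
    nlinarith [h2, hkey, hxv]
  · have := hupper v
    nlinarith [mul_le_mul_of_nonneg_right hXlow hV]
end
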